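/- arXiv:2203.06168 — 9 statements merged into one kernel-verified Lean document; each statement's English description precedes it below -/
import Mathlib

section
/- Let z₁, …, z_m be (not necessarily independent) jointly defined Gaussian random variables with E[Σ_{i=1}^m z_i²] = 1. Then P[Σ_{i=1}^m z_i² ≥ 1/2] ≥ 1/12. -/
open MeasureTheory ProbabilityTheory Real Set
open scoped NNReal ENNReal Nat

/-! Put `S = ∑ i, z i ^ 2`. A Gaussian `X ~ N(a, v)` has `E[X⁴] = 3v² + 6va² + a⁴ ≤ 3 E[X²]²`,
so by Cauchy–Schwarz `E[z i ^ 2 * z j ^ 2] ≤ 3 E[z i ^ 2] E[z j ^ 2]` for every pair, whatever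
the joint law; summing gives `E[S²] ≤ 3 E[S]² = 3`. The Paley–Zygmund inequality
`P(S ≥ θ E[S]) ≥ (1 - θ)² E[S]² / E[S²]` with `θ = 1/2` then yields `1/12`. -/

lemma integral_even_pow_mul_exp_neg_mul_sq {b : ℝ} (hb : 0 < b) (k : ℕ) :
    ∫ x : ℝ, x ^ (2 * k) * rexp (-b * x ^ 2) = (2 * k - 1 : ℕ)‼ * √(π / b) / (2 * b) ^ k := by
  have hIoi := integral_rpow_mul_exp_neg_mul_rpow two_pos (q := 2 * k)
    (by linarith [(Nat.cast_nonneg k : (0 : ℝ) ≤ k)]) hb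
  have habs : ∫ x : ℝ, x ^ (2 * k) * rexp (-b * x ^ 2)
      = 2 * ∫ x in Ioi (0 : ℝ), x ^ (2 * k : ℝ) * rexp (-b * x ^ (2 : ℝ)) := by
    rw [← integral_comp_abs]
    congr 1 with x
    rw [show (2 * k : ℝ) = ((2 * k : ℕ) : ℝ) by push_cast; ring, rpow_natCast, rpow_two,
      pow_mul, pow_mul, sq_abs]
  rw [habs, hIoi, show (2 * k + 1 : ℝ) / 2 = k + 1 / 2 by ring, Gamma_nat_add_half,
    show -(2 * k + 1 : ℝ) / 2 = -k + -(1 / 2) by ring, rpow_add hb, rpow_neg hb.le,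
    rpow_natCast, rpow_neg hb.le, ← sqrt_eq_rpow, sqrt_div' _ hb.le, mul_pow]
  field_simp

lemma integral_even_pow_gaussianReal_zero (v : ℝ≥0) (k : ℕ) :
    ∫ x, x ^ (2 * k) ∂gaussianReal 0 v = v ^ k * (2 * k - 1 : ℕ)‼ := by
  rcases eq_or_ne v 0 with rfl | hv
  · cases k <;> simp [gaussianReal_zero_var]
  have hv' : (0 : ℝ) < v := by positivity
  have hb : 0 < (2 * (v : ℝ))⁻¹ := by positivity
  rw [integral_gaussianReal_eq_integral_smul hv]
  simp only [gaussianPDFReal, sub_zero, smul_eq_mul]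
  have hintegrand : ∀ x : ℝ, (√(2 * π * v))⁻¹ * rexp (-x ^ 2 / (2 * v)) * x ^ (2 * k)
      = (√(2 * π * v))⁻¹ * (x ^ (2 * k) * rexp (-(2 * v : ℝ)⁻¹ * x ^ 2)) := fun x ↦ by ring_nf
  simp_rw [hintegrand]
  rw [integral_const_mul, integral_even_pow_mul_exp_neg_mul_sq hb,
    show π / (2 * (v : ℝ))⁻¹ = 2 * π * v by field_simp]
  have hsqrt : √(2 * π * v) ≠ 0 := by positivity
  field_simp
  rw [← mul_pow, one_div, inv_mul_cancel₀ hv'.ne', one_pow]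

lemma integral_odd_pow_gaussianReal_zero (v : ℝ≥0) {n : ℕ} (hn : Odd n) :
    ∫ x, x ^ n ∂gaussianReal 0 v = 0 := by
  -- `N(0, v)` is invariant under `x ↦ -x`, which negates odd powers.
  have h := integral_map (μ := gaussianReal 0 v) (f := fun x : ℝ ↦ x ^ n)
    (measurable_neg.aemeasurable) (by fun_prop)
  simp only [gaussianReal_map_neg, neg_zero, hn.neg_pow, integral_neg] at h
  linarith

lemma integrable_pow_gaussianReal (a : ℝ) (v : ℝ≥0) (n : ℕ) :
    Integrable (fun x ↦ x ^ n) (gaussianReal a v) :=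
  integrable_pow_of_mem_interior_integrableExpSet (by simp) n

lemma integral_pow_gaussianReal (a : ℝ) (v : ℝ≥0) (n : ℕ) :
    ∫ x, x ^ n ∂gaussianReal a v
      = ∑ k ∈ Finset.range (n + 1), (∫ x, x ^ k ∂gaussianReal 0 v) * a ^ (n - k) * n.choose k := by
  have hshift := gaussianReal_map_add_const (μ := 0) (v := v) a
  rw [zero_add] at hshift
  rw [← hshift, integral_map (by fun_prop) (by fun_prop)]
  simp_rw [add_pow]
  rw [integral_finsetSum _ fun k _ ↦ ((integrable_pow_gaussianReal 0 v k).mul_const _).mul_const _]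
  simp_rw [integral_mul_const]

lemma integral_sq_gaussianReal (a : ℝ) (v : ℝ≥0) :
    ∫ x, x ^ 2 ∂gaussianReal a v = v + a ^ 2 := by
  have h1 := integral_odd_pow_gaussianReal_zero v odd_one
  have h2 := integral_even_pow_gaussianReal_zero v 1
  simp only [pow_one] at h1
  simp [integral_pow_gaussianReal a v 2, Finset.sum_range_succ, h1, h2]
  ring

lemma integral_pow_four_gaussianReal (a : ℝ) (v : ℝ≥0) :
    ∫ x, x ^ 4 ∂gaussianReal a v = 3 * v ^ 2 + 6 * v * a ^ 2 + a ^ 4 := by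
  have h1 := integral_odd_pow_gaussianReal_zero v odd_one
  have h2 := integral_even_pow_gaussianReal_zero v 1
  have h3 := integral_odd_pow_gaussianReal_zero v (by decide : Odd 3)
  have h4 := integral_even_pow_gaussianReal_zero v 2
  simp only [pow_one] at h1
  simp [integral_pow_gaussianReal a v 4, Finset.sum_range_succ, Nat.choose, h1, h2, h3, h4]
  ring

lemma integral_pow_four_le_gaussianReal (a : ℝ) (v : ℝ≥0) :
    ∫ x, x ^ 4 ∂gaussianReal a v ≤ 3 * (∫ x, x ^ 2 ∂gaussianReal a v) ^ 2 := by
  rw [integral_pow_four_gaussianReal, integral_sq_gaussianReal]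
  nlinarith [sq_nonneg a, v.coe_nonneg, pow_nonneg (sq_nonneg a) 2]

namespace ProbabilityTheory.HasLaw

variable {Ω : Type*} [MeasurableSpace Ω] {P : Measure Ω} {X : Ω → ℝ} {a : ℝ} {v : ℝ≥0}

lemma memLp_sq_of_gaussianReal (hX : HasLaw X (gaussianReal a v) P) :
    MemLp (fun ω ↦ X ω ^ 2) 2 P := by
  refine (memLp_two_iff_integrable_sq (hX.aemeasurable.pow_const 2).aestronglyMeasurable).2 ?_
  have h := integrable_pow_gaussianReal a v 4
  rw [← hX.map_eq, integrable_map_measure (by fun_prop) hX.aemeasurable] at h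
  simpa [Function.comp_def, ← pow_mul] using h

lemma integral_sq_sq_le_of_gaussianReal (hX : HasLaw X (gaussianReal a v) P) :
    ∫ ω, (X ω ^ 2) ^ 2 ∂P ≤ 3 * (∫ ω, X ω ^ 2 ∂P) ^ 2 := by
  have h4 := hX.integral_comp (f := fun x ↦ x ^ 4) (by fun_prop)
  have h2 := hX.integral_comp (f := fun x ↦ x ^ 2) (by fun_prop)
  simp only [Function.comp_def] at h4 h2
  simp_rw [← pow_mul]
  rw [h4, h2]
  exact integral_pow_four_le_gaussianReal a v

end ProbabilityTheory.HasLaw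

section

variable {Ω : Type*} [MeasurableSpace Ω] {P : Measure Ω}

lemma integral_mul_le_sqrt_mul_sqrt_of_nonneg {f g : Ω → ℝ} (hf₀ : 0 ≤ᵐ[P] f) (hg₀ : 0 ≤ᵐ[P] g)
    (hf : MemLp f 2 P) (hg : MemLp g 2 P) :
    ∫ ω, f ω * g ω ∂P ≤ √(∫ ω, f ω ^ 2 ∂P) * √(∫ ω, g ω ^ 2 ∂P) := by
  have h := integral_mul_le_Lp_mul_Lq_of_nonneg (p := 2) (q := 2)
    (by norm_num [Real.holderConjugate_iff]) hf₀ hg₀ (by simpa using hf) (by simpa using hg)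
  simpa [sqrt_eq_rpow] using h

lemma integral_sq_finsetSum_le {ι : Type*} (s : Finset ι) {f : ι → Ω → ℝ} {C : ℝ} (hC : 0 ≤ C)
    (hf₀ : ∀ i, 0 ≤ᵐ[P] f i) (hf : ∀ i, MemLp (f i) 2 P)
    (hmom : ∀ i, ∫ ω, f i ω ^ 2 ∂P ≤ C * (∫ ω, f i ω ∂P) ^ 2) :
    ∫ ω, (∑ i ∈ s, f i ω) ^ 2 ∂P ≤ C * (∑ i ∈ s, ∫ ω, f i ω ∂P) ^ 2 := by
  have hnorm : ∀ i, √(∫ ω, f i ω ^ 2 ∂P) ≤ √C * ∫ ω, f i ω ∂P := fun i ↦ by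
    rw [← sqrt_sq (integral_nonneg_of_ae (hf₀ i)), ← sqrt_mul hC]
    exact sqrt_le_sqrt (hmom i)
  have hpair : ∀ i j, ∫ ω, f i ω * f j ω ∂P ≤ C * ((∫ ω, f i ω ∂P) * ∫ ω, f j ω ∂P) := fun i j ↦
    calc ∫ ω, f i ω * f j ω ∂P
        ≤ √(∫ ω, f i ω ^ 2 ∂P) * √(∫ ω, f j ω ^ 2 ∂P) :=
          integral_mul_le_sqrt_mul_sqrt_of_nonneg (hf₀ i) (hf₀ j) (hf i) (hf j)
      _ ≤ (√C * ∫ ω, f i ω ∂P) * (√C * ∫ ω, f j ω ∂P) :=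
          mul_le_mul (hnorm i) (hnorm j) (sqrt_nonneg _)
            (mul_nonneg (sqrt_nonneg _) (integral_nonneg_of_ae (hf₀ i)))
      _ = C * ((∫ ω, f i ω ∂P) * ∫ ω, f j ω ∂P) := by
          rw [mul_mul_mul_comm, mul_self_sqrt hC]
  simp_rw [sq, Finset.sum_mul_sum]
  have hint : ∀ i j, Integrable (fun ω ↦ f i ω * f j ω) P := fun i j ↦ (hf i).integrable_mul (hf j)
  rw [integral_finsetSum _ fun i _ ↦ integrable_finsetSum _ fun j _ ↦ hint i j, Finset.mul_sum]
  refine Finset.sum_le_sum fun i _ ↦ ?_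
  rw [integral_finsetSum _ fun j _ ↦ hint i j, Finset.mul_sum]
  exact Finset.sum_le_sum fun j _ ↦ hpair i j

lemma paley_zygmund [IsProbabilityMeasure P] {S : Ω → ℝ} (hSm : Measurable S) (hS₀ : 0 ≤ᵐ[P] S)
    (hS : MemLp S 2 P) {θ : ℝ} (hθ₀ : 0 ≤ θ) (hθ₁ : θ ≤ 1) :
    (1 - θ) ^ 2 * (∫ ω, S ω ∂P) ^ 2 ≤ (∫ ω, S ω ^ 2 ∂P) * P.real {ω | θ * ∫ ω, S ω ∂P ≤ S ω} := by
  set m := ∫ ω, S ω ∂P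
  set A := {ω | θ * m ≤ S ω}
  have hA : MeasurableSet A := measurableSet_le measurable_const hSm
  have hm : 0 ≤ m := integral_nonneg_of_ae hS₀
  have hS_int : Integrable S P := hS.integrable one_le_two
  have hS2_int : Integrable (fun ω ↦ S ω ^ 2) P := hS.integrable_sq
  have hcompl : ∫ ω in Aᶜ, S ω ∂P ≤ θ * m :=
    calc ∫ ω in Aᶜ, S ω ∂P ≤ ∫ _ in Aᶜ, θ * m ∂P :=
          setIntegral_mono_on hS_int.integrableOn integrableOn_const hA.compl
            fun ω (hω : ¬θ * m ≤ S ω) ↦ (not_le.mp hω).le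
      _ = P.real Aᶜ * (θ * m) := by rw [setIntegral_const, smul_eq_mul]
      _ ≤ θ * m := mul_le_of_le_one_left (by positivity) measureReal_le_one
  have hon : ∫ ω in A, S ω ∂P ≤ √(∫ ω, S ω ^ 2 ∂P) * √(P.real A) :=
    calc ∫ ω in A, S ω ∂P = ∫ ω in A, S ω * 1 ∂P := by simp_rw [mul_one]
      _ ≤ √(∫ ω in A, S ω ^ 2 ∂P) * √(∫ ω in A, (1 : ℝ) ^ 2 ∂P) :=
          integral_mul_le_sqrt_mul_sqrt_of_nonneg (ae_restrict_of_ae hS₀)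
            (ae_of_all _ fun _ ↦ zero_le_one) (hS.restrict A) (memLp_const 1)
      _ = √(∫ ω in A, S ω ^ 2 ∂P) * √(P.real A) := by simp
      _ ≤ √(∫ ω, S ω ^ 2 ∂P) * √(P.real A) := by
          gcongr 2
          exact setIntegral_le_integral hS2_int (ae_of_all _ fun _ ↦ sq_nonneg _)
  have hsplit := integral_add_compl hA hS_int
  have key : (1 - θ) * m ≤ √((∫ ω, S ω ^ 2 ∂P) * P.real A) := by
    rw [sqrt_mul (integral_nonneg fun _ ↦ sq_nonneg _)]
    linarith
  rw [← mul_pow]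
  exact (le_sqrt (mul_nonneg (by linarith) hm)
    (mul_nonneg (integral_nonneg fun _ ↦ sq_nonneg _) measureReal_nonneg)).mp key

end

/-- If `z₁, …, z_m` are (not necessarily independent) Gaussian random variables with
`E[Σᵢ zᵢ²] = 1`, then `P[Σᵢ zᵢ² ≥ 1/2] ≥ 1/12`. -/
theorem stmt_2 {Ω : Type*} [MeasurableSpace Ω] (μ : Measure Ω) [IsProbabilityMeasure μ]
    (m : ℕ) (z : Fin m → Ω → ℝ)
    (hmeas : ∀ i, Measurable (z i))
    (hgauss : ∀ i, ∃ (a : ℝ) (s : NNReal), μ.map (z i) = gaussianReal a s)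
    (hexp : ∫ ω, ∑ i, z i ω ^ 2 ∂μ = 1) :
    (1 : ENNReal) / 12 ≤ μ {ω | 1 / 2 ≤ ∑ i, z i ω ^ 2} := by
  have hz : ∀ i, MemLp (fun ω ↦ z i ω ^ 2) 2 μ ∧
      ∫ ω, (z i ω ^ 2) ^ 2 ∂μ ≤ 3 * (∫ ω, z i ω ^ 2 ∂μ) ^ 2 := fun i ↦ by
    obtain ⟨a, s, h⟩ := hgauss i
    have hX : HasLaw (z i) (gaussianReal a s) μ := ⟨(hmeas i).aemeasurable, h⟩
    exact ⟨hX.memLp_sq_of_gaussianReal, hX.integral_sq_sq_le_of_gaussianReal⟩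
  have hS2 : ∫ ω, (∑ i, z i ω ^ 2) ^ 2 ∂μ ≤ 3 := by
    have h := integral_sq_finsetSum_le Finset.univ (by norm_num : (0 : ℝ) ≤ 3)
      (fun i ↦ ae_of_all _ fun ω ↦ sq_nonneg (z i ω)) (fun i ↦ (hz i).1) (fun i ↦ (hz i).2)
    rwa [← integral_finsetSum _ fun i _ ↦ (hz i).1.integrable one_le_two, hexp, one_pow,
      mul_one] at h
  have hPZ := paley_zygmund (P := μ) (S := fun ω ↦ ∑ i, z i ω ^ 2) (θ := 1 / 2)
    (by fun_prop) (ae_of_all _ fun ω ↦ by positivity) (memLp_finsetSum _ fun i _ ↦ (hz i).1)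
    (by norm_num) (by norm_num)
  rw [hexp, mul_one] at hPZ
  have hP : 1 / 12 ≤ μ.real {ω | 1 / 2 ≤ ∑ i, z i ω ^ 2} := by
    nlinarith [measureReal_nonneg (μ := μ) (s := {ω | 1 / 2 ≤ ∑ i, z i ω ^ 2})]
  rw [← ofReal_measureReal]
  exact (ENNReal.ofReal_le_ofReal hP).trans_eq' (by norm_num [ENNReal.ofReal_div_of_pos])
end

section
/- Let Γ_{ij}, for 1 ≤ i ≤ d and 1 ≤ j ≤ m, be Gaussian random variables with mean 0 and variance at most 1, such that for each fixed i the variables Γ_{i1}, …, Γ_{im} are mutually independent. Let Y_i := (1/m) Σ_{j=1}^m Γ_{ij}² and Y := max_{i∈[d]} Y_i. Then E[Y] ≤ 4(1 + (1 + log d)/m). -/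
/-!
For a centered Gaussian `X` of variance `v ≤ 1`, `E[exp (X² / 4)] = (1 - v / 2)^(-1/2) ≤ √2`, so by
independence along a row `E[exp (m Yᵢ / 4)] ≤ 2^(m/2)`. Jensen's inequality for `exp` and the bound
`exp (t · maxᵢ Yᵢ) ≤ Σᵢ exp (t Yᵢ)` give `exp (m E[Y] / 4) ≤ d · 2^(m/2)`, i.e.
`E[Y] ≤ 4 log d / m + 2 log 2`.
-/

open MeasureTheory ProbabilityTheory Real
open scoped NNReal

lemma inv_sqrt_one_sub_le_sqrt_two {x : ℝ} (hx : x ≤ 1 / 2) : (√(1 - x))⁻¹ ≤ √2 := by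
  rw [← sqrt_inv]
  apply sqrt_le_sqrt
  rw [inv_le_comm₀ (by linarith) two_pos]
  linarith

namespace ProbabilityTheory

lemma integrable_gaussianReal_iff_integrable_smul {E : Type*} [NormedAddCommGroup E]
    [NormedSpace ℝ E] {μ : ℝ} {v : ℝ≥0} {f : ℝ → E} (hv : v ≠ 0) :
    Integrable f (gaussianReal μ v) ↔ Integrable (fun x ↦ gaussianPDFReal μ v x • f x) := by
  simp [gaussianReal, hv, integrable_withDensity_iff_integrable_smul' (measurable_gaussianPDF _ _)
      (ae_of_all _ fun _ ↦ gaussianPDF_lt_top)]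

lemma gaussianPDFReal_zero_mul_exp_mul_sq {v : ℝ≥0} (hv : v ≠ 0) (c x : ℝ) :
    gaussianPDFReal 0 v x * exp (c * x ^ 2) =
      (√(2 * π * v))⁻¹ * exp (-(1 / (2 * v) - c) * x ^ 2) := by
  have hv' : (v : ℝ) ≠ 0 := mod_cast hv
  rw [gaussianPDFReal, mul_assoc, ← exp_add]
  congr 2
  field_simp
  ring

lemma integrable_exp_mul_sq_gaussianReal {v : ℝ≥0} {c : ℝ} (h : 2 * c * v < 1) :
    Integrable (fun x ↦ exp (c * x ^ 2)) (gaussianReal 0 v) := by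
  rcases eq_or_ne v 0 with rfl | hv
  · rw [gaussianReal_zero_var]
    exact integrable_dirac enorm_lt_top
  have hb : 0 < 1 / (2 * v) - c := by
    have : (0 : ℝ) < v := by positivity
    rw [sub_pos, lt_div_iff₀ (by positivity)]
    linarith
  rw [integrable_gaussianReal_iff_integrable_smul hv]
  simp_rw [smul_eq_mul, gaussianPDFReal_zero_mul_exp_mul_sq hv]
  exact (integrable_exp_neg_mul_sq hb).const_mul _

lemma integral_exp_mul_sq_gaussianReal {v : ℝ≥0} {c : ℝ} (h : 2 * c * v < 1) :
    ∫ x, exp (c * x ^ 2) ∂gaussianReal 0 v = (√(1 - 2 * c * v))⁻¹ := by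
  rcases eq_or_ne v 0 with rfl | hv
  · simp [gaussianReal_zero_var]
  rw [integral_gaussianReal_eq_integral_smul hv]
  simp_rw [smul_eq_mul, gaussianPDFReal_zero_mul_exp_mul_sq hv]
  rw [integral_const_mul, integral_gaussian, ← sqrt_inv, ← sqrt_mul (by positivity), ← sqrt_inv]
  congr 1
  field_simp

variable {Ω ι : Type*} [MeasurableSpace Ω] {μ : Measure Ω} [Fintype ι]

lemma iIndepFun.integral_exp_mul_sum_sq_of_gaussian {X : ι → Ω → ℝ} {v : ι → ℝ≥0} {c : ℝ}
    (hindep : iIndepFun X μ) (hmeas : ∀ j, Measurable (X j))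
    (hlaw : ∀ j, μ.map (X j) = gaussianReal 0 (v j)) (hc : ∀ j, 2 * c * v j < 1) :
    Integrable (fun ω ↦ exp (c * ∑ j, X j ω ^ 2)) μ ∧
      ∫ ω, exp (c * ∑ j, X j ω ^ 2) ∂μ = ∏ j, (√(1 - 2 * c * v j))⁻¹ := by
  have : IsProbabilityMeasure μ := hindep.isProbabilityMeasure
  have hsq : Measurable fun x : ℝ ↦ x ^ 2 := by fun_prop
  have hindep_sq : iIndepFun (fun j ω ↦ X j ω ^ 2) μ := hindep.comp _ fun _ ↦ hsq
  have hmeas_sq : ∀ j, Measurable fun ω ↦ X j ω ^ 2 := fun j ↦ hsq.comp (hmeas j)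
  have hexp_meas : ∀ j, AEStronglyMeasurable (fun x : ℝ ↦ exp (c * x ^ 2)) (μ.map (X j)) :=
    fun j ↦ by fun_prop
  have hint : ∀ j, Integrable (fun ω ↦ exp (c * X j ω ^ 2)) μ := fun j ↦ by
    have := integrable_exp_mul_sq_gaussianReal (hc j)
    rwa [← hlaw j, integrable_map_measure (hexp_meas j) (hmeas j).aemeasurable] at this
  have hmgf : ∀ j, mgf (fun ω ↦ X j ω ^ 2) μ c = (√(1 - 2 * c * v j))⁻¹ := fun j ↦ by
    rw [← integral_exp_mul_sq_gaussianReal (hc j), ← hlaw j,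
      integral_map (hmeas j).aemeasurable (hexp_meas j)]
    rfl
  constructor
  · simpa only [Finset.sum_apply] using
      hindep_sq.integrable_exp_mul_sum hmeas_sq (s := Finset.univ) fun j _ ↦ hint j
  · have := hindep_sq.mgf_sum hmeas_sq Finset.univ (t := c)
    simp only [mgf, Finset.sum_apply] at this
    rw [this]
    exact Finset.prod_congr rfl fun j _ ↦ hmgf j

lemma iIndepFun.integral_exp_one_div_four_mul_sum_sq_le {X : ι → Ω → ℝ} {v : ι → ℝ≥0}
    (hindep : iIndepFun X μ) (hmeas : ∀ j, Measurable (X j))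
    (hlaw : ∀ j, μ.map (X j) = gaussianReal 0 (v j)) (hvar : ∀ j, v j ≤ 1) :
    Integrable (fun ω ↦ exp (1 / 4 * ∑ j, X j ω ^ 2)) μ ∧
      ∫ ω, exp (1 / 4 * ∑ j, X j ω ^ 2) ∂μ ≤ √2 ^ Fintype.card ι := by
  have hc : ∀ j, 2 * (1 / 4) * (v j : ℝ) ≤ 1 / 2 := fun j ↦ by
    have : (v j : ℝ) ≤ 1 := hvar j
    linarith
  obtain ⟨hint, heq⟩ := hindep.integral_exp_mul_sum_sq_of_gaussian hmeas hlaw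
    fun j ↦ (hc j).trans_lt (by norm_num)
  refine ⟨hint, heq ▸ ?_⟩
  calc ∏ j, (√(1 - 2 * (1 / 4) * v j))⁻¹ ≤ ∏ _j : ι, √2 :=
        Finset.prod_le_prod (fun _ _ ↦ by positivity) fun j _ ↦ inv_sqrt_one_sub_le_sqrt_two (hc j)
    _ = √2 ^ Fintype.card ι := by simp

lemma integrable_sq_of_map_eq_gaussianReal {X : Ω → ℝ} {m : ℝ} {v : ℝ≥0} (hX : AEMeasurable X μ)
    (hlaw : μ.map X = gaussianReal m v) : Integrable (fun ω ↦ X ω ^ 2) μ := by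
  have h : MemLp id 2 (μ.map X) := hlaw ▸ memLp_id_gaussianReal' 2 (by norm_num)
  exact ((memLp_map_measure_iff aestronglyMeasurable_id hX).1 h).integrable_sq

lemma exp_mul_integral_iSup_le_sum_integral_exp [IsProbabilityMeasure μ] [Nonempty ι]
    {Y : ι → Ω → ℝ} {t : ℝ} (hY : ∀ i, Integrable (Y i) μ)
    (hexp : ∀ i, Integrable (fun ω ↦ exp (t * Y i ω)) μ) :
    exp (t * ∫ ω, ⨆ i, Y i ω ∂μ) ≤ ∑ i, ∫ ω, exp (t * Y i ω) ∂μ := by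
  have hsup_meas : AEStronglyMeasurable (fun ω ↦ ⨆ i, Y i ω) μ :=
    (AEMeasurable.iSup fun i ↦ (hY i).aemeasurable).aestronglyMeasurable
  have hsup_abs : ∀ ω, |⨆ i, Y i ω| ≤ ∑ i, |Y i ω| := fun ω ↦ by
    obtain ⟨i, hi⟩ := exists_eq_ciSup_of_finite (f := fun i ↦ Y i ω)
    rw [← hi]
    exact Finset.single_le_sum (f := fun i ↦ |Y i ω|) (fun _ _ ↦ abs_nonneg _) (Finset.mem_univ i)
  have hexp_sup : ∀ ω, exp (t * ⨆ i, Y i ω) ≤ ∑ i, exp (t * Y i ω) := fun ω ↦ by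
    obtain ⟨i, hi⟩ := exists_eq_ciSup_of_finite (f := fun i ↦ Y i ω)
    rw [← hi]
    exact Finset.single_le_sum (f := fun i ↦ exp (t * Y i ω)) (fun _ _ ↦ (exp_pos _).le)
      (Finset.mem_univ i)
  have hsup_int : Integrable (fun ω ↦ ⨆ i, Y i ω) μ :=
    (integrable_finsetSum _ fun i _ ↦ (hY i).abs).mono' hsup_meas
      (ae_of_all _ fun ω ↦ by simpa only [Real.norm_eq_abs, Finset.sum_apply] using hsup_abs ω)
  have hexp_int : Integrable (fun ω ↦ exp (t * ⨆ i, Y i ω)) μ :=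
    (integrable_finsetSum _ fun i _ ↦ hexp i).mono'
      (continuous_exp.comp_aestronglyMeasurable (hsup_meas.const_mul t))
      (ae_of_all _ fun ω ↦ by
        simpa only [Real.norm_eq_abs, abs_of_pos (exp_pos _), Finset.sum_apply] using hexp_sup ω)
  calc exp (t * ∫ ω, ⨆ i, Y i ω ∂μ) = exp (∫ ω, t * ⨆ i, Y i ω ∂μ) := by
        rw [integral_const_mul]
    _ ≤ ∫ ω, exp (t * ⨆ i, Y i ω) ∂μ :=
        convexOn_exp.map_integral_le continuous_exp.continuousOn isClosed_univ
          (ae_of_all _ fun _ ↦ Set.mem_univ _) (hsup_int.const_mul t) hexp_int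
    _ ≤ ∫ ω, ∑ i, exp (t * Y i ω) ∂μ :=
        integral_mono hexp_int (integrable_finsetSum _ fun i _ ↦ hexp i) hexp_sup
    _ = ∑ i, ∫ ω, exp (t * Y i ω) ∂μ := integral_finsetSum _ fun i _ ↦ hexp i

end ProbabilityTheory

/-- Let `Γᵢⱼ` (1 ≤ i ≤ d, 1 ≤ j ≤ m) be centered Gaussians with variance at most 1, such
that for each fixed `i` the row `Γᵢ₁, …, Γᵢₘ` is mutually independent. With
`Yᵢ = (1/m) Σⱼ Γᵢⱼ²` and `Y = maxᵢ Yᵢ`, we have `E[Y] ≤ 4 (1 + (1 + log d)/m)`. -/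
theorem stmt_3 {Ω : Type*} [MeasurableSpace Ω] (μ : Measure Ω) [IsProbabilityMeasure μ]
    (d m : ℕ) (hd : 1 ≤ d) (hm : 1 ≤ m)
    (Γ : Fin d → Fin m → Ω → ℝ) (v : Fin d → Fin m → NNReal)
    (hmeas : ∀ i j, Measurable (Γ i j))
    (hlaw : ∀ i j, μ.map (Γ i j) = gaussianReal 0 (v i j))
    (hvar : ∀ i j, v i j ≤ 1)
    (hindep : ∀ i, iIndepFun (fun j => Γ i j) μ) :
    ∫ ω, (⨆ i, (1 / (m : ℝ)) * ∑ j, Γ i j ω ^ 2) ∂μ ≤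
      4 * (1 + (1 + Real.log d) / m) := by
  have : Nonempty (Fin d) := ⟨⟨0, hd⟩⟩
  have hm_pos : (0 : ℝ) < m := Nat.cast_pos.2 hm
  have hrow i := (hindep i).integral_exp_one_div_four_mul_sum_sq_le (hmeas i) (hlaw i) (hvar i)
  have hscale : ∀ i ω, m / 4 * ((1 / (m : ℝ)) * ∑ j, Γ i j ω ^ 2) = 1 / 4 * ∑ j, Γ i j ω ^ 2 :=
    fun i ω ↦ by field_simp
  have key := exp_mul_integral_iSup_le_sum_integral_exp (μ := μ) (t := m / 4)
    (Y := fun i ω ↦ (1 / (m : ℝ)) * ∑ j, Γ i j ω ^ 2)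
    (fun i ↦ (integrable_finsetSum _ fun j _ ↦
      integrable_sq_of_map_eq_gaussianReal (hmeas i j).aemeasurable (hlaw i j)).const_mul _)
    (fun i ↦ by simpa only [hscale] using (hrow i).1)
  simp only [hscale] at key
  have hsum : ∑ i, ∫ ω, exp (1 / 4 * ∑ j, Γ i j ω ^ 2) ∂μ ≤ d * √2 ^ m :=
    (Finset.sum_le_sum fun i _ ↦ (hrow i).2).trans_eq (by simp)
  have hmain := (le_log_iff_exp_le (by positivity)).2 (key.trans hsum)
  rw [log_mul (by positivity) (by positivity), log_pow, log_sqrt zero_le_two] at hmain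
  rw [← mul_le_mul_iff_of_pos_left (div_pos hm_pos four_pos)]
  calc _ ≤ log d + m * (log 2 / 2) := hmain
    _ ≤ m / 4 * (4 * (1 + (1 + log d) / m)) := by
      field_simp
      nlinarith [log_two_lt_d9]
end

section
/- Let X ∈ ℝ^{n×n} be symmetric with eigenvalues λ₁ ≤ λ₂ ≤ ⋯ ≤ λ_n, and let 1 ≤ k ≤ n. Then λ₁ + ⋯ + λ_k equals the minimum of tr(XY) over all symmetric matrices Y satisfying 0 ⪯ Y ⪯ I_n and tr(Y) = k. -/
/-!
In an orthonormal eigenbasis of `X`, `tr (X Y) = ∑ λᵢ Zᵢᵢ` with `Z = Uᴴ Y U`. The diagonal of a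
matrix `0 ⪯ Z ⪯ I` with `tr Z = k` lies in the hypersimplex `{w ∈ [0,1]ⁿ | ∑ wᵢ = k}`, and every
point `w` of it is such a diagonal (take `Z = diagonal w`). So the minimum is that of the linear
form `w ↦ ∑ λᵢ wᵢ` on the hypersimplex, attained at the indicator of the `k` smallest eigenvalues:
with `c = λ_k`, every term `(λᵢ - c) (wᵢ - [i ≤ k])` is nonnegative and they sum to the excess.
-/

open Matrix Finset

def hypersimplex (ι : Type*) [Fintype ι] (s : ℝ) : Set (ι → ℝ) :=
  {w | (∀ i, w i ∈ Set.Icc 0 1) ∧ ∑ i, w i = s}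

section Hypersimplex

variable {ι : Type*} [Fintype ι]

theorem sum_le_sum_mul_of_mem_hypersimplex [DecidableEq ι] {S : Finset ι} {f w : ι → ℝ} {c : ℝ}
    (hS : ∀ i ∈ S, f i ≤ c) (hSc : ∀ i ∉ S, c ≤ f i) (hw : w ∈ hypersimplex ι #S) :
    ∑ i ∈ S, f i ≤ ∑ i, f i * w i := by
  obtain ⟨hw, hsum⟩ := hw
  have hterm : ∀ i, 0 ≤ (f i - c) * (w i - if i ∈ S then 1 else 0) := by
    intro i
    by_cases hi : i ∈ S
    · simp only [hi, if_true]
      exact mul_nonneg_of_nonpos_of_nonpos (by linarith [hS i hi]) (by linarith [(hw i).2])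
    · simp only [hi, if_false, sub_zero]
      exact mul_nonneg (by linarith [hSc i hi]) (hw i).1
  have hexpand : ∑ i, (f i - c) * (w i - if i ∈ S then 1 else 0)
      = ∑ i, f i * w i - ∑ i ∈ S, f i := by
    simp only [sub_mul, mul_sub, sum_sub_distrib, ← mul_sum, hsum, mul_ite, mul_one, mul_zero,
      sum_ite_mem, univ_inter, sum_const, nsmul_eq_mul]
    ring
  rw [← sub_nonneg, ← hexpand]
  exact sum_nonneg fun i _ => hterm i

theorem indicator_mem_hypersimplex [DecidableEq ι] (S : Finset ι) :
    (fun i => if i ∈ S then (1 : ℝ) else 0) ∈ hypersimplex ι #S := by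
  refine ⟨fun i => ?_, by simp⟩
  dsimp only
  split_ifs <;> simp

theorem isLeast_image_hypersimplex [DecidableEq ι] {S : Finset ι} {f : ι → ℝ} {c : ℝ}
    (hS : ∀ i ∈ S, f i ≤ c) (hSc : ∀ i ∉ S, c ≤ f i) :
    IsLeast ((fun w => ∑ i, f i * w i) '' hypersimplex ι #S) (∑ i ∈ S, f i) := by
  refine ⟨⟨_, indicator_mem_hypersimplex S, by simp⟩, ?_⟩
  rintro _ ⟨w, hw, rfl⟩
  exact sum_le_sum_mul_of_mem_hypersimplex hS hSc hw

theorem comp_perm_mem_hypersimplex {w : ι → ℝ} {s : ℝ} (σ : Equiv.Perm ι)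
    (hw : w ∈ hypersimplex ι s) :
    w ∘ σ ∈ hypersimplex ι s :=
  ⟨fun i => hw.1 (σ i), by rw [← hw.2]; exact Equiv.sum_comp σ w⟩

theorem image_hypersimplex_comp_perm (f : ι → ℝ) (σ : Equiv.Perm ι) (s : ℝ) :
    (fun w => ∑ i, (f ∘ σ) i * w i) '' hypersimplex ι s
      = (fun w => ∑ i, f i * w i) '' hypersimplex ι s := by
  ext t
  constructor
  · rintro ⟨w, hw, rfl⟩
    refine ⟨w ∘ σ.symm, comp_perm_mem_hypersimplex σ.symm hw, ?_⟩
    simpa using (Equiv.sum_comp σ (fun i => f i * w (σ.symm i))).symm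
  · rintro ⟨w, hw, rfl⟩
    exact ⟨w ∘ σ, comp_perm_mem_hypersimplex σ hw, Equiv.sum_comp σ (fun i => f i * w i)⟩

theorem Monotone.isLeast_image_hypersimplex {n k : ℕ} (hk1 : 1 ≤ k) (hkn : k ≤ n) {f : Fin n → ℝ}
    (hf : Monotone f) :
    IsLeast ((fun w => ∑ i, f i * w i) '' hypersimplex (Fin n) k)
      (∑ i ∈ univ.filter (fun i : Fin n => (i : ℕ) < k), f i) := by
  have hcard : #(univ.filter fun i : Fin n => (i : ℕ) < k) = k := by
    rw [Fin.card_filter_val_lt, min_eq_right hkn]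
  let kth : Fin n := ⟨k - 1, by omega⟩
  have hbelow : ∀ i ∈ univ.filter (fun i : Fin n => (i : ℕ) < k), f i ≤ f kth := by
    intro i hi
    simp only [mem_filter, mem_univ, true_and] at hi
    exact hf (show (i : ℕ) ≤ k - 1 by omega)
  have habove : ∀ i ∉ univ.filter (fun i : Fin n => (i : ℕ) < k), f kth ≤ f i := by
    intro i hi
    simp only [mem_filter, mem_univ, true_and] at hi
    exact hf (show k - 1 ≤ (i : ℕ) by omega)
  simpa only [hcard] using _root_.isLeast_image_hypersimplex hbelow habove

end Hypersimplex

namespace Matrix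

def fantope (m : Type*) [Fintype m] [DecidableEq m] (s : ℝ) : Set (Matrix m m ℝ) :=
  {Y | Y.PosSemidef ∧ (1 - Y).PosSemidef ∧ Y.trace = s}

variable {m : Type*} [Fintype m] [DecidableEq m] {s : ℝ}

theorem diag_mem_hypersimplex {Z : Matrix m m ℝ} (hZ : Z ∈ fantope m s) :
    Z.diag ∈ hypersimplex m s := by
  obtain ⟨hZ, hIZ, htr⟩ := hZ
  refine ⟨fun i => ⟨hZ.diag_nonneg, ?_⟩, htr⟩
  simpa using hIZ.diag_nonneg (i := i)

theorem diagonal_mem_fantope {w : m → ℝ} (hw : w ∈ hypersimplex m s) :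
    diagonal w ∈ fantope m s := by
  refine ⟨PosSemidef.diagonal fun i => (hw.1 i).1, ?_, by simpa using hw.2⟩
  rw [← diagonal_one, diagonal_sub]
  exact PosSemidef.diagonal fun i => sub_nonneg.mpr (hw.1 i).2

theorem star_mul_mul_mem_fantope {U Y : Matrix m m ℝ} (hU : U ∈ unitaryGroup m ℝ)
    (hY : Y ∈ fantope m s) : star U * Y * U ∈ fantope m s := by
  obtain ⟨hY, hIY, htr⟩ := hY
  have hconj : 1 - star U * Y * U = star U * (1 - Y) * U := by
    rw [Matrix.mul_sub, Matrix.sub_mul, Matrix.mul_one, Unitary.star_mul_self_of_mem hU]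
  refine ⟨hY.conjTranspose_mul_mul_same U, hconj ▸ hIY.conjTranspose_mul_mul_same U, ?_⟩
  rw [trace_mul_cycle, Unitary.mul_star_self_of_mem hU, one_mul, htr]

theorem trace_mul_eq_sum_mul_diag_of_star_mul_mul_eq_diagonal {U X : Matrix m m ℝ} {d : m → ℝ}
    (hU : U ∈ unitaryGroup m ℝ) (hX : star U * X * U = diagonal d) (Y : Matrix m m ℝ) :
    (X * Y).trace = ∑ i, d i * (star U * Y * U) i i := by
  have hconj : star U * X * U * (star U * Y * U) = star U * (X * Y) * U := by
    calc star U * X * U * (star U * Y * U) = star U * X * (U * star U) * Y * U := by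
          simp only [Matrix.mul_assoc]
      _ = star U * (X * Y) * U := by
          rw [Unitary.mul_star_self_of_mem hU, Matrix.mul_one, Matrix.mul_assoc (star U) X Y]
  calc (X * Y).trace = (star U * (X * Y) * U).trace := by
        rw [trace_mul_cycle, Unitary.mul_star_self_of_mem hU, Matrix.one_mul]
    _ = ∑ i, d i * (star U * Y * U) i i := by
        rw [← hconj, hX]
        simp [trace, diagonal_mul]

theorem IsHermitian.image_trace_mul_fantope {X : Matrix m m ℝ} (hX : X.IsHermitian) (s : ℝ) :
    (fun Y => (X * Y).trace) '' fantope m s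
      = (fun w => ∑ i, hX.eigenvalues i * w i) '' hypersimplex m s := by
  set U : Matrix m m ℝ := ↑hX.eigenvectorUnitary
  have hU : U ∈ unitaryGroup m ℝ := hX.eigenvectorUnitary.2
  have hdiag : star U * X * U = diagonal hX.eigenvalues := by
    simpa using hX.conjStarAlgAut_star_eigenvectorUnitary
  have htrace := trace_mul_eq_sum_mul_diag_of_star_mul_mul_eq_diagonal hU hdiag
  ext t
  constructor
  · rintro ⟨Y, hY, rfl⟩
    exact ⟨_, diag_mem_hypersimplex (star_mul_mul_mem_fantope hU hY), (htrace Y).symm⟩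
  · rintro ⟨w, hw, rfl⟩
    have hY := star_mul_mul_mem_fantope (Unitary.star_mem hU) (diagonal_mem_fantope hw)
    rw [star_star] at hY
    refine ⟨_, hY, ?_⟩
    have hw' : star U * (U * diagonal w * star U) * U = diagonal w := by
      simp only [Matrix.mul_assoc, Unitary.star_mul_self_of_mem hU, Matrix.mul_one]
      rw [← Matrix.mul_assoc, Unitary.star_mul_self_of_mem hU, Matrix.one_mul]
    simp [htrace, hw']

end Matrix

/-- For a symmetric real matrix `X` with eigenvalues `λ₁ ≤ ⋯ ≤ λ_n` and `1 ≤ k ≤ n`,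
`λ₁ + ⋯ + λ_k` is the minimum of `tr(XY)` over symmetric matrices `Y` with
`0 ⪯ Y ⪯ I` and `tr(Y) = k`. -/
theorem stmt_5 {n k : ℕ} (hk1 : 1 ≤ k) (hkn : k ≤ n)
    (X : Matrix (Fin n) (Fin n) ℝ) (hX : X.IsHermitian)
    (ev : Fin n → ℝ) (hmono : Monotone ev)
    (hev : ∃ σ : Equiv.Perm (Fin n), ev = hX.eigenvalues ∘ σ) :
    IsLeast {t : ℝ | ∃ Y : Matrix (Fin n) (Fin n) ℝ,
        Y.PosSemidef ∧ ((1 : Matrix (Fin n) (Fin n) ℝ) - Y).PosSemidef ∧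
        Y.trace = (k : ℝ) ∧ t = (X * Y).trace}
      (∑ i ∈ Finset.univ.filter (fun i : Fin n => (i : ℕ) < k), ev i) := by
  obtain ⟨σ, hσ⟩ := hev
  convert hmono.isLeast_image_hypersimplex hk1 hkn using 1
  rw [hσ, image_hypersimplex_comp_perm, ← hX.image_trace_mul_fantope]
  ext t
  simp only [fantope, Set.mem_ofPred_eq, Set.mem_image, and_assoc, eq_comm]
end

section
/- Let G = (V, E⃗) be a directed graph with vertex weights π: V → ℝ≥0. For S ⊆ V define the directed vertex boundary ∂⃗S as the set of vertices v ∈ S having some in-neighbor u ∉ S, together with vertices v ∉ S having some in-neighbor u ∈ S, and set ψ⃗(S) := π(∂⃗S)/π(S). For S ⊆ V in the underlying undirected graph define ∂S' as the set of vertices outside S' adjacent to S' and ψ(S') := π(∂S')/π(S'). If S has ψ⃗(S) < 1/2, then the set S' := S − ∂⃗S satisfies ψ(S') ≤ 2ψ⃗(S) in the underlying undirected graph. -/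
open Finset

/-- Directed vertex boundary: vertices `v ∈ S` with an in-neighbor outside `S`,
together with vertices `v ∉ S` with an in-neighbor inside `S`. -/
def dirBoundary {V : Type*} [Fintype V] [DecidableEq V]
    (A : V → V → Prop) [DecidableRel A] (S : Finset V) : Finset V :=
  (S.filter fun v => ∃ u, u ∉ S ∧ A u v) ∪
    ((Finset.univ \ S).filter fun v => ∃ u, u ∈ S ∧ A u v)

/-- Undirected vertex boundary of `S'` in the underlying undirected graph of `A`. -/
def undirBoundary {V : Type*} [Fintype V] [DecidableEq V]
    (A : V → V → Prop) [DecidableRel A] (S' : Finset V) : Finset V :=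
  (Finset.univ \ S').filter fun v => ∃ u, u ∈ S' ∧ (A u v ∨ A v u)

/-- If `S` has directed vertex expansion `ψ⃗(S) = π(∂⃗S)/π(S) < 1/2`, then
`S' = S − ∂⃗S` satisfies `ψ(S') = π(∂S')/π(S') ≤ 2·ψ⃗(S)` in the underlying
undirected graph. -/
theorem stmt_6 {V : Type*} [Fintype V] [DecidableEq V]
    (A : V → V → Prop) [DecidableRel A] (π : V → ℝ) (hπ : ∀ v, 0 ≤ π v)
    (S : Finset V) (hSpos : 0 < ∑ v ∈ S, π v)
    (hψ : (∑ v ∈ dirBoundary A S, π v) / (∑ v ∈ S, π v) < 1 / 2) :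
    (∑ v ∈ undirBoundary A (S \ dirBoundary A S), π v) /
        (∑ v ∈ S \ dirBoundary A S, π v) ≤
      2 * ((∑ v ∈ dirBoundary A S, π v) / (∑ v ∈ S, π v)) := by
  set D := dirBoundary A S with hD
  set s := ∑ v ∈ S, π v
  set b := ∑ v ∈ D, π v with hb
  have hb0 : 0 ≤ b := Finset.sum_nonneg fun v _ => hπ v
  have hbs : b < s / 2 := by
    rw [div_lt_iff₀ hSpos] at hψ; linarith
  -- boundary of S' is contained in D
  have hsub : undirBoundary A (S \ D) ⊆ D := by
    intro v hv
    simp only [undirBoundary, mem_filter, mem_sdiff, mem_univ, true_and] at hv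
    obtain ⟨hvS', u, hu, hA⟩ := hv
    obtain ⟨huS, huD⟩ := hu
    by_cases hvS : v ∈ S
    · by_contra hvD
      exact hvS' ⟨hvS, hvD⟩
    · rcases hA with h | h
      · -- A u v, u ∈ S, v ∉ S
        exact mem_union_right _ (mem_filter.mpr
          ⟨mem_sdiff.mpr ⟨mem_univ v, hvS⟩, u, huS, h⟩)
      · -- A v u, v ∉ S, u ∈ S: contradiction with u ∉ D
        exact absurd (mem_union_left _ (mem_filter.mpr ⟨huS, v, hvS, h⟩)) huD
  have h1 : ∑ v ∈ undirBoundary A (S \ D), π v ≤ b :=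
    Finset.sum_le_sum_of_subset_of_nonneg hsub fun v _ _ => hπ v
  have h2 : s - b ≤ ∑ v ∈ S \ D, π v := by
    have := Finset.sum_inter_add_sum_sdiff S D π
    have hle : ∑ v ∈ S ∩ D, π v ≤ b :=
      Finset.sum_le_sum_of_subset_of_nonneg (Finset.inter_subset_right)
        fun v _ _ => hπ v
    linarith
  have hs'pos : 0 < ∑ v ∈ S \ D, π v := by linarith
  rw [div_le_iff₀ hs'pos]
  have key : 2 * (b / s) * (∑ v ∈ S \ D, π v) ≥ 2 * (b / s) * (s - b) := by
    apply mul_le_mul_of_nonneg_left h2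
    positivity
  have : b ≤ 2 * (b / s) * (s - b) := by
    have hne : s ≠ 0 := hSpos.ne'
    rw [show 2 * (b / s) * (s - b) = 2 * b * (s - b) / s by field_simp,
      le_div_iff₀ hSpos]
    nlinarith
  linarith
end

section
/- Let G = (V, E⃗) be a directed graph with vertex weights π. Let S₁, S₂ be two disjoint subsets with directed bipartite vertex expansion ψ⃗(S₁,S₂) < 1/2, where ∂⃗(S₁,S₂) consists of: vertices v ∈ Sᵢ (i ∈ {1,2}) with an in-neighbor in Sᵢ or in V∖(S₁∪S₂), together with vertices v ∉ S₁∪S₂ with an in-neighbor in S₁∪S₂, and ψ⃗(S₁,S₂) := π(∂⃗(S₁,S₂))/π(S₁∪S₂). Then S₁' := S₁ − ∂⃗(S₁,S₂) and S₂' := S₂ − ∂⃗(S₁,S₂) satisfy: S₁' ∪ S₂' induces a bipartite subgraph of the underlying undirected graph (with parts S₁', S₂'), and π(∂(S₁'∪S₂')) ≤ 2ψ⃗(S₁,S₂)·π(S₁'∪S₂'). -/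
open Finset

/-- Directed bipartite vertex boundary `∂⃗(S₁,S₂)`: vertices of `Sᵢ` with an in-neighbor
in `Sᵢ` or in `V ∖ (S₁ ∪ S₂)`, together with vertices outside `S₁ ∪ S₂` with an
in-neighbor in `S₁ ∪ S₂`. -/
def dirBipBoundary {V : Type*} [Fintype V] [DecidableEq V]
    (A : V → V → Prop) [DecidableRel A] (S₁ S₂ : Finset V) : Finset V :=
  (S₁.filter fun v => (∃ u, u ∈ S₁ ∧ A u v) ∨ (∃ u, u ∉ S₁ ∪ S₂ ∧ A u v)) ∪
    (S₂.filter fun v => (∃ u, u ∈ S₂ ∧ A u v) ∨ (∃ u, u ∉ S₁ ∪ S₂ ∧ A u v)) ∪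
    ((Finset.univ \ (S₁ ∪ S₂)).filter fun v => ∃ u, u ∈ S₁ ∪ S₂ ∧ A u v)

/-- Undirected vertex boundary of `T` in the underlying undirected graph of `A`. -/
def undirBoundary' {V : Type*} [Fintype V] [DecidableEq V]
    (A : V → V → Prop) [DecidableRel A] (T : Finset V) : Finset V :=
  (Finset.univ \ T).filter fun v => ∃ u, u ∈ T ∧ (A u v ∨ A v u)


lemma memB1 {V : Type*} [Fintype V] [DecidableEq V]
    (A : V → V → Prop) [DecidableRel A] {S₁ S₂ : Finset V} {v u : V}
    (hv : v ∈ S₁) (h : (u ∈ S₁ ∨ u ∉ S₁ ∪ S₂)) (hA : A u v) :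
    v ∈ dirBipBoundary A S₁ S₂ := by
  unfold dirBipBoundary
  refine mem_union_left _ (mem_union_left _ (mem_filter.2 ⟨hv, ?_⟩))
  rcases h with h | h
  · exact Or.inl ⟨u, h, hA⟩
  · exact Or.inr ⟨u, h, hA⟩

lemma memB2 {V : Type*} [Fintype V] [DecidableEq V]
    (A : V → V → Prop) [DecidableRel A] {S₁ S₂ : Finset V} {v u : V}
    (hv : v ∈ S₂) (h : (u ∈ S₂ ∨ u ∉ S₁ ∪ S₂)) (hA : A u v) :
    v ∈ dirBipBoundary A S₁ S₂ := by
  unfold dirBipBoundary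
  refine mem_union_left _ (mem_union_right _ (mem_filter.2 ⟨hv, ?_⟩))
  rcases h with h | h
  · exact Or.inl ⟨u, h, hA⟩
  · exact Or.inr ⟨u, h, hA⟩

lemma memB3 {V : Type*} [Fintype V] [DecidableEq V]
    (A : V → V → Prop) [DecidableRel A] {S₁ S₂ : Finset V} {v u : V}
    (hv : v ∉ S₁ ∪ S₂) (h : u ∈ S₁ ∪ S₂) (hA : A u v) :
    v ∈ dirBipBoundary A S₁ S₂ := by
  unfold dirBipBoundary
  exact mem_union_right _ (mem_filter.2 ⟨mem_sdiff.2 ⟨mem_univ v, hv⟩, u, h, hA⟩)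

/-- If disjoint `S₁, S₂` have directed bipartite vertex expansion
`ψ⃗(S₁,S₂) = π(∂⃗(S₁,S₂))/π(S₁∪S₂) < 1/2`, then `Sᵢ' := Sᵢ − ∂⃗(S₁,S₂)` induce a
bipartite subgraph of the underlying undirected graph (no undirected edge within
`S₁'` nor within `S₂'`), and `π(∂(S₁'∪S₂')) ≤ 2·ψ⃗(S₁,S₂)·π(S₁'∪S₂')`. -/
theorem stmt_7 {V : Type*} [Fintype V] [DecidableEq V]
    (A : V → V → Prop) [DecidableRel A] (π : V → ℝ) (hπ : ∀ v, 0 ≤ π v)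
    (S₁ S₂ : Finset V) (hdisj : Disjoint S₁ S₂)
    (hpos : 0 < ∑ v ∈ S₁ ∪ S₂, π v)
    (hψ : (∑ v ∈ dirBipBoundary A S₁ S₂, π v) / (∑ v ∈ S₁ ∪ S₂, π v) < 1 / 2) :
    (∀ u ∈ S₁ \ dirBipBoundary A S₁ S₂, ∀ v ∈ S₁ \ dirBipBoundary A S₁ S₂,
        ¬ (A u v ∨ A v u)) ∧
    (∀ u ∈ S₂ \ dirBipBoundary A S₁ S₂, ∀ v ∈ S₂ \ dirBipBoundary A S₁ S₂,
        ¬ (A u v ∨ A v u)) ∧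
    (∑ v ∈ undirBoundary' A ((S₁ \ dirBipBoundary A S₁ S₂) ∪ (S₂ \ dirBipBoundary A S₁ S₂)), π v) ≤
      2 * ((∑ v ∈ dirBipBoundary A S₁ S₂, π v) / (∑ v ∈ S₁ ∪ S₂, π v)) *
        (∑ v ∈ (S₁ \ dirBipBoundary A S₁ S₂) ∪ (S₂ \ dirBipBoundary A S₁ S₂), π v) := by
  set B := dirBipBoundary A S₁ S₂ with hB
  refine ⟨?_, ?_, ?_⟩
  · rintro u hu v hv (h | h)
    · exact (mem_sdiff.1 hv).2 (memB1 A (mem_sdiff.1 hv).1 (Or.inl (mem_sdiff.1 hu).1) h)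
    · exact (mem_sdiff.1 hu).2 (memB1 A (mem_sdiff.1 hu).1 (Or.inl (mem_sdiff.1 hv).1) h)
  · rintro u hu v hv (h | h)
    · exact (mem_sdiff.1 hv).2 (memB2 A (mem_sdiff.1 hv).1 (Or.inl (mem_sdiff.1 hu).1) h)
    · exact (mem_sdiff.1 hu).2 (memB2 A (mem_sdiff.1 hu).1 (Or.inl (mem_sdiff.1 hv).1) h)
  · set T : Finset V := (S₁ \ B) ∪ (S₂ \ B) with hT
    have hTeq : T = (S₁ ∪ S₂) \ B := by rw [hT, union_sdiff_distrib]
    -- boundary subset of B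
    have hsub : undirBoundary' A T ⊆ B := by
      intro w hw
      rw [undirBoundary', mem_filter, mem_sdiff] at hw
      obtain ⟨⟨-, hwT⟩, u, huT, hA⟩ := hw
      rw [hTeq, mem_sdiff] at huT
      obtain ⟨huS, huB⟩ := huT
      by_cases hwS : w ∈ S₁ ∪ S₂
      · -- w ∈ S₁ ∪ S₂ but not in T, so w ∈ B
        by_contra hwB
        exact hwT (by rw [hTeq, mem_sdiff]; exact ⟨hwS, hwB⟩)
      · rcases hA with hA | hA
        · exact memB3 A hwS huS hA
        · -- A w u with w outside: u ∈ B, contradiction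
          exact absurd (by
            rcases mem_union.1 huS with h | h
            · exact memB1 A h (Or.inr hwS) hA
            · exact memB2 A h (Or.inr hwS) hA) huB
    have h1 : (∑ v ∈ undirBoundary' A T, π v) ≤ ∑ v ∈ B, π v :=
      Finset.sum_le_sum_of_subset_of_nonneg hsub (fun v _ _ => hπ v)
    have h2 : (∑ v ∈ S₁ ∪ S₂, π v) ≤ (∑ v ∈ T, π v) + (∑ v ∈ B, π v) := by
      have : (∑ v ∈ T, π v) + (∑ v ∈ B, π v) = ∑ v ∈ T ∪ B, π v := by
        rw [hTeq]; exact (Finset.sum_union sdiff_disjoint).symm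
      rw [this]
      apply Finset.sum_le_sum_of_subset_of_nonneg _ (fun v _ _ => hπ v)
      rw [hTeq, sdiff_union_self_eq_union]
      exact subset_union_left
    have hbnn : 0 ≤ ∑ v ∈ B, π v := Finset.sum_nonneg fun v _ => hπ v
    have htnn : 0 ≤ ∑ v ∈ T, π v := Finset.sum_nonneg fun v _ => hπ v
    rw [div_lt_iff₀ hpos] at hψ
    calc (∑ v ∈ undirBoundary' A T, π v) ≤ ∑ v ∈ B, π v := h1
      _ ≤ _ := by
        rw [mul_comm, ← mul_div_assoc, ← mul_div_assoc, le_div_iff₀ hpos]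
        nlinarith
end

section
/- Let G = (V,E) be an undirected graph with an optimizer set S achieving the weighted vertex expansion: 0 < π(S) ≤ 1/2 and π(∂S)/π(S) = ψ. Then the one-dimensional program γ⁽¹⁾(G) — minimizing Σ_v π(v)g(v) over f: V → ℝ, g: V → ℝ≥0 subject to Σ_v π(v)f(v)² = 1, Σ_v π(v)f(v) = 0, and g(u)+g(v) ≥ (f(u)−f(v))² for all uv ∈ E — has value at most 2ψ. -/
/-!
Take for `f` the indicator of `S`, centred and normalised in `L²(π)`: with `p = π(S)`, the
centred indicator `𝟙_S - p` has mean `0` and variance `p (1 - p)`, and it jumps by exactly `1`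
across every edge between `S` and its complement. Such an edge always has an endpoint in `∂S`,
so `g = 𝟙_{∂S} / (p (1 - p))` pays for all jumps, at cost `π(∂S) / (p (1 - p)) ≤ 2 π(∂S) / p`
because `1 - p ≥ 1/2`.
-/

open Finset

namespace VertexExpansion

variable {V : Type*} [Fintype V] [DecidableEq V]

def vertexBoundary (E : V → V → Prop) [DecidableRel E] (S : Finset V) : Finset V :=
  (univ \ S).filter fun v => ∃ u, u ∈ S ∧ E u v

/-- The constraints of the one-dimensional program `γ⁽¹⁾(G)`. -/
def OneDimFeasible (E : V → V → Prop) (π f g : V → ℝ) : Prop :=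
  (∀ v, 0 ≤ g v) ∧ (∑ v, π v * f v ^ 2 = 1) ∧ (∑ v, π v * f v = 0) ∧
    ∀ u v, E u v → (f u - f v) ^ 2 ≤ g u + g v

def centeredIndicator (π : V → ℝ) (S : Finset V) (v : V) : ℝ :=
  (if v ∈ S then 1 else 0) - ∑ w ∈ S, π w

variable {π : V → ℝ} {S : Finset V}

theorem sum_mul_centeredIndicator (hπ1 : ∑ v, π v = 1) :
    ∑ v, π v * centeredIndicator π S v = 0 := by
  simp only [centeredIndicator, mul_sub, mul_ite, mul_one, mul_zero, sum_sub_distrib,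
    sum_ite_mem, univ_inter, ← sum_mul, hπ1, one_mul, sub_self]

theorem sum_mul_centeredIndicator_sq (hπ1 : ∑ v, π v = 1) :
    ∑ v, π v * centeredIndicator π S v ^ 2 = (∑ v ∈ S, π v) * (1 - ∑ v ∈ S, π v) := by
  set p := ∑ v ∈ S, π v
  have hsq : ∀ v, centeredIndicator π S v ^ 2 =
      (1 - 2 * p) * (if v ∈ S then 1 else 0) + p ^ 2 := by
    intro v
    simp only [centeredIndicator]
    split_ifs <;> ring
  simp only [hsq, mul_add, mul_ite, mul_one, mul_zero, sum_add_distrib, sum_ite_mem,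
    univ_inter, ← sum_mul, hπ1]
  ring

theorem sq_centeredIndicator_sub_le_of_adj {E : V → V → Prop} [DecidableRel E]
    (hsymm : Symmetric E) {u v : V} (huv : E u v) :
    (centeredIndicator π S u - centeredIndicator π S v) ^ 2 ≤
      (if u ∈ vertexBoundary E S then 1 else 0) + (if v ∈ vertexBoundary E S then 1 else 0) := by
  have hmem : ∀ {x y}, x ∈ S → y ∉ S → E x y → y ∈ vertexBoundary E S := fun hx hy hxy =>
    mem_filter.2 ⟨mem_sdiff.2 ⟨mem_univ _, hy⟩, _, hx, hxy⟩
  simp only [centeredIndicator, sub_sub_sub_cancel_right]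
  by_cases hu : u ∈ S <;> by_cases hv : v ∈ S
  · simp only [hu, hv, if_true, sub_self]; split_ifs <;> norm_num
  · simp only [hu, hv, hmem hu hv huv, if_true, if_false]; split_ifs <;> norm_num
  · simp only [hu, hv, hmem hv hu (hsymm huv), if_true, if_false]; split_ifs <;> norm_num
  · simp only [hu, hv, if_false, sub_self]; split_ifs <;> norm_num

theorem exists_oneDimFeasible {E : V → V → Prop} [DecidableRel E]
    (hsymm : Symmetric E) (hπ1 : ∑ v, π v = 1) (hS0 : 0 < ∑ v ∈ S, π v)
    (hS1 : ∑ v ∈ S, π v < 1) :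
    ∃ f g, OneDimFeasible E π f g ∧
      ∑ v, π v * g v = (∑ v ∈ vertexBoundary E S, π v) /
        ((∑ v ∈ S, π v) * (1 - ∑ v ∈ S, π v)) := by
  set σ := (∑ v ∈ S, π v) * (1 - ∑ v ∈ S, π v)
  have hσ : 0 < σ := mul_pos hS0 (sub_pos.2 hS1)
  have hc : (1 / √σ) ^ 2 = 1 / σ := by rw [div_pow, Real.sq_sqrt hσ.le, one_pow]
  refine ⟨fun v => 1 / √σ * centeredIndicator π S v,
    fun v => 1 / σ * if v ∈ vertexBoundary E S then 1 else 0, ⟨?_, ?_, ?_, ?_⟩, ?_⟩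
  · intro v; positivity
  · simp only [mul_pow, hc, mul_left_comm (π _), ← mul_sum, sum_mul_centeredIndicator_sq hπ1]
    exact one_div_mul_cancel hσ.ne'
  · simp only [mul_left_comm (π _), ← mul_sum, sum_mul_centeredIndicator hπ1, mul_zero]
  · intro u v huv
    rw [← mul_sub, mul_pow, hc, ← mul_add]
    exact mul_le_mul_of_nonneg_left (sq_centeredIndicator_sub_le_of_adj hsymm huv) (by positivity)
  · simp only [mul_ite, mul_one, mul_zero, sum_ite_mem, univ_inter]
    rw [← sum_mul, mul_one_div]

end VertexExpansion

open VertexExpansion in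
/-- Easy direction of Cheeger's inequality for weighted vertex expansion: if `S` is an
optimizer with `0 < π(S) ≤ 1/2` and vertex expansion `ψ = π(∂S)/π(S)`, then the
one-dimensional dual program `γ⁽¹⁾(G)` has a feasible solution of value at most `2ψ`. -/
theorem stmt_9 {V : Type*} [Fintype V] [DecidableEq V]
    (E : V → V → Prop) [DecidableRel E] (hsymm : Symmetric E)
    (π : V → ℝ) (hπ : ∀ v, 0 ≤ π v) (hπ1 : ∑ v, π v = 1)
    (S : Finset V) (hS0 : 0 < ∑ v ∈ S, π v) (hS2 : ∑ v ∈ S, π v ≤ 1 / 2) :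
    ∃ (f g : V → ℝ),
      (∀ v, 0 ≤ g v) ∧
      (∑ v, π v * f v ^ 2 = 1) ∧
      (∑ v, π v * f v = 0) ∧
      (∀ u v, E u v → (f u - f v) ^ 2 ≤ g u + g v) ∧
      ∑ v, π v * g v ≤
        2 * ((∑ v ∈ (Finset.univ \ S).filter (fun v => ∃ u, u ∈ S ∧ E u v), π v) /
          (∑ v ∈ S, π v)) := by
  obtain ⟨f, g, ⟨hg, hf2, hf1, hedge⟩, hcost⟩ :=
    exists_oneDimFeasible hsymm hπ1 hS0 (by linarith)
  refine ⟨f, g, hg, hf2, hf1, hedge, ?_⟩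
  have hboundary : 0 ≤ ∑ v ∈ vertexBoundary E S, π v := sum_nonneg fun v _ => hπ v
  have hcompl : 1 / (1 - ∑ v ∈ S, π v) ≤ 2 := by
    rw [div_le_iff₀ (by linarith)]; linarith
  calc ∑ v, π v * g v
      = (∑ v ∈ vertexBoundary E S, π v) / (∑ v ∈ S, π v) * (1 / (1 - ∑ v ∈ S, π v)) := by
        rw [hcost, div_mul_div_comm, mul_one]
    _ ≤ (∑ v ∈ vertexBoundary E S, π v) / (∑ v ∈ S, π v) * 2 := by gcongr
    _ = _ := mul_comm _ _
end

section
/- Let G = (V,E) be an undirected graph with disjoint nonempty subsets S₁, S₂ such that the induced subgraph on S₁ ∪ S₂ is bipartite with parts S₁, S₂. Then the program ν⁽¹⁾(G) — minimizing Σ_v π(v)g(v) over f: V → ℝ, g: V → ℝ≥0 subject to Σ_v π(v)f(v)² = 1 and g(u)+g(v) ≥ (f(u)+f(v))² for all uv ∈ E — has value at most 2·π(∂(S₁∪S₂))/π(S₁∪S₂). -/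
/-!
Put `f = h / √π(S)` with `S = S₁ ∪ S₂` and `h = 1` on `S₁`, `h = -1` on `S₂`, `h = 0` elsewhere,
and let `g = 2 / π(S)` on `∂S` and `0` elsewhere. Then `∑ π f² = 1`, and `(h u + h v)²` vanishes
on edges inside `S` (they join `S₁` to `S₂`) and outside `S`, while an edge leaving `S` has its
outer endpoint in `∂S`, where `g` pays for it. Hence `∑ π g = 2 π(∂S) / π(S)`.
-/

open Finset

section

variable {V : Type*} [DecidableEq V]

def bipartiteSign (S₁ S₂ : Finset V) (v : V) : ℝ :=
  if v ∈ S₁ then 1 else if v ∈ S₂ then -1 else 0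

def vertexBoundary [Fintype V] (E : V → V → Prop) [DecidableRel E]
    (S : Finset V) : Finset V :=
  (univ \ S).filter fun v => ∃ u, u ∈ S ∧ E u v

theorem mem_vertexBoundary [Fintype V] {E : V → V → Prop} [DecidableRel E] {S : Finset V}
    {v : V} : v ∈ vertexBoundary E S ↔ v ∉ S ∧ ∃ u ∈ S, E u v := by
  simp [vertexBoundary]

theorem sum_mul_ite_mem [Fintype V] (π : V → ℝ) (T : Finset V) (c : ℝ) :
    ∑ v, π v * (if v ∈ T then c else 0) = c * ∑ v ∈ T, π v := by
  simp_rw [mul_ite, mul_zero, sum_ite_mem, univ_inter, mul_comm (π _) c, mul_sum]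

variable {S₁ S₂ : Finset V}

theorem bipartiteSign_sq (v : V) :
    bipartiteSign S₁ S₂ v ^ 2 = if v ∈ S₁ ∪ S₂ then 1 else 0 := by
  unfold bipartiteSign
  by_cases h₁ : v ∈ S₁ <;> by_cases h₂ : v ∈ S₂ <;> simp [h₁, h₂]

theorem bipartiteSign_eq_zero {v : V} (hv : v ∉ S₁ ∪ S₂) : bipartiteSign S₁ S₂ v = 0 := by
  rw [mem_union, not_or] at hv
  simp [bipartiteSign, hv.1, hv.2]

theorem sq_bipartiteSign_of_mem {v : V} (hv : v ∈ S₁ ∪ S₂) : bipartiteSign S₁ S₂ v ^ 2 = 1 := by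
  rw [bipartiteSign_sq, if_pos hv]

theorem bipartiteSign_add_eq_zero {E : V → V → Prop}
    (hbip₁ : ∀ u ∈ S₁, ∀ v ∈ S₁, ¬ E u v) (hbip₂ : ∀ u ∈ S₂, ∀ v ∈ S₂, ¬ E u v)
    {u v : V} (huv : E u v) (hu : u ∈ S₁ ∪ S₂) (hv : v ∈ S₁ ∪ S₂) :
    bipartiteSign S₁ S₂ u + bipartiteSign S₁ S₂ v = 0 := by
  rw [mem_union] at hu hv
  unfold bipartiteSign
  rcases hu with hu₁ | hu₂
  · have hv₁ : v ∉ S₁ := fun hv₁ => hbip₁ u hu₁ v hv₁ huv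
    simp [hu₁, hv₁, hv.resolve_left hv₁]
  · have hv₂ : v ∉ S₂ := fun hv₂ => hbip₂ u hu₂ v hv₂ huv
    have hu₁ : u ∉ S₁ := fun hu₁ => hbip₁ u hu₁ v (hv.resolve_right hv₂) huv
    simp [hu₁, hu₂, hv.resolve_right hv₂]

theorem sq_bipartiteSign_add_le [Fintype V] {E : V → V → Prop} [DecidableRel E]
    (hsymm : Symmetric E)
    (hbip₁ : ∀ u ∈ S₁, ∀ v ∈ S₁, ¬ E u v) (hbip₂ : ∀ u ∈ S₂, ∀ v ∈ S₂, ¬ E u v)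
    {u v : V} (huv : E u v) :
    (bipartiteSign S₁ S₂ u + bipartiteSign S₁ S₂ v) ^ 2 ≤
      (if u ∈ vertexBoundary E (S₁ ∪ S₂) then 2 else 0) +
        (if v ∈ vertexBoundary E (S₁ ∪ S₂) then 2 else 0) := by
  have weight_nonneg : ∀ x, (0 : ℝ) ≤ if x ∈ vertexBoundary E (S₁ ∪ S₂) then 2 else 0 := by
    intro x; split_ifs <;> norm_num
  by_cases hu : u ∈ S₁ ∪ S₂ <;> by_cases hv : v ∈ S₁ ∪ S₂
  · rw [bipartiteSign_add_eq_zero hbip₁ hbip₂ huv hu hv]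
    linarith [weight_nonneg u, weight_nonneg v]
  · rw [bipartiteSign_eq_zero hv, add_zero, sq_bipartiteSign_of_mem hu,
      if_pos (mem_vertexBoundary.2 ⟨hv, u, hu, huv⟩)]
    linarith [weight_nonneg u]
  · rw [bipartiteSign_eq_zero hu, zero_add, sq_bipartiteSign_of_mem hv,
      if_pos (mem_vertexBoundary.2 ⟨hu, v, hv, hsymm huv⟩)]
    linarith [weight_nonneg v]
  · rw [bipartiteSign_eq_zero hu, bipartiteSign_eq_zero hv]
    linarith [weight_nonneg u, weight_nonneg v]

end

theorem stmt_10_general {V : Type*} [Fintype V] [DecidableEq V]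
    (E : V → V → Prop) [DecidableRel E] (hsymm : Symmetric E)
    (π : V → ℝ)
    (S₁ S₂ : Finset V)
    (hbip₁ : ∀ u ∈ S₁, ∀ v ∈ S₁, ¬ E u v)
    (hbip₂ : ∀ u ∈ S₂, ∀ v ∈ S₂, ¬ E u v)
    (hpos : 0 < ∑ v ∈ S₁ ∪ S₂, π v) :
    ∃ (f g : V → ℝ),
      (∀ v, 0 ≤ g v) ∧
      (∑ v, π v * f v ^ 2 = 1) ∧
      (∀ u v, E u v → (f u + f v) ^ 2 ≤ g u + g v) ∧
      ∑ v, π v * g v ≤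
        2 * ((∑ v ∈ (Finset.univ \ (S₁ ∪ S₂)).filter
            (fun v => ∃ u, u ∈ S₁ ∪ S₂ ∧ E u v), π v) / (∑ v ∈ S₁ ∪ S₂, π v)) := by
  set s := ∑ v ∈ S₁ ∪ S₂, π v
  set c : V → ℝ := fun v => if v ∈ vertexBoundary E (S₁ ∪ S₂) then 2 else 0
  have hs : √s ^ 2 = s := Real.sq_sqrt hpos.le
  refine ⟨fun v => bipartiteSign S₁ S₂ v / √s, fun v => c v / s, ?_, ?_, ?_, ?_⟩
  · intro v
    positivity
  · simp_rw [div_pow, hs, mul_div_assoc', ← sum_div, bipartiteSign_sq, sum_mul_ite_mem, one_mul]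
    exact div_self hpos.ne'
  · intro u v huv
    rw [← add_div, div_pow, hs, ← add_div]
    exact div_le_div_of_nonneg_right (sq_bipartiteSign_add_le hsymm hbip₁ hbip₂ huv) hpos.le
  · simp_rw [c, mul_div_assoc', ← sum_div, sum_mul_ite_mem, mul_div_assoc]
    rfl

/-- Easy direction of Cheeger's inequality for bipartite vertex expansion: if `S₁, S₂`
are disjoint nonempty sets inducing a bipartite subgraph (parts `S₁`, `S₂`), then the
program `ν⁽¹⁾(G)` has a feasible solution of value at most
`2·π(∂(S₁∪S₂))/π(S₁∪S₂)`. -/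
theorem stmt_10 {V : Type*} [Fintype V] [DecidableEq V]
    (E : V → V → Prop) [DecidableRel E] (hsymm : Symmetric E)
    (π : V → ℝ) (hπ : ∀ v, 0 ≤ π v) (hπ1 : ∑ v, π v = 1)
    (S₁ S₂ : Finset V) (hS₁ : S₁.Nonempty) (hS₂ : S₂.Nonempty)
    (hdisj : Disjoint S₁ S₂)
    (hbip₁ : ∀ u ∈ S₁, ∀ v ∈ S₁, ¬ E u v)
    (hbip₂ : ∀ u ∈ S₂, ∀ v ∈ S₂, ¬ E u v)
    (hpos : 0 < ∑ v ∈ S₁ ∪ S₂, π v) :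
    ∃ (f g : V → ℝ),
      (∀ v, 0 ≤ g v) ∧
      (∑ v, π v * f v ^ 2 = 1) ∧
      (∀ u v, E u v → (f u + f v) ^ 2 ≤ g u + g v) ∧
      ∑ v, π v * g v ≤
        2 * ((∑ v ∈ (Finset.univ \ (S₁ ∪ S₂)).filter
            (fun v => ∃ u, u ∈ S₁ ∪ S₂ ∧ E u v), π v) / (∑ v ∈ S₁ ∪ S₂, π v)) :=
  stmt_10_general E hsymm π S₁ S₂ hbip₁ hbip₂ hpos
end

section
/- Let f: V → ℝ^h be an embedding of a finite weighted vertex set (V, π) satisfying the sub-isotropy condition Σ_v π(v) f(v)f(v)ᵀ ⪯ I_h. Then for every Δ ∈ [0,1) and every subset S ⊆ V with f(v) ≠ 0 for all v ∈ S whose radial-projection diameter satisfies max_{u,v∈S} ‖f(u)/‖f(u)‖ − f(v)/‖f(v)‖‖ ≤ Δ, we have Σ_{v∈S} π(v)‖f(v)‖² ≤ 1/(1−Δ²). -/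
open Finset
open scoped InnerProductSpace

/-- Sub-isotropy implies spreading: if `Σ_v π(v) f(v)f(v)ᵀ ⪯ I_h`, then every set `S`
of radial-projection diameter at most `Δ < 1` (with `f(v) ≠ 0` on `S`) carries
`π`-weighted squared-norm mass `Σ_{v∈S} π(v)‖f(v)‖² ≤ 1/(1−Δ²)`. -/
theorem stmt_13 {V : Type*} [Fintype V] {h : ℕ}
    (π : V → ℝ) (hπ : ∀ v, 0 ≤ π v)
    (f : V → EuclideanSpace ℝ (Fin h))
    (hiso : ((1 : Matrix (Fin h) (Fin h) ℝ) -
        Matrix.of (fun a b => ∑ v, π v * f v a * f v b)).PosSemidef)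
    (Δ : ℝ) (hΔ0 : 0 ≤ Δ) (hΔ1 : Δ < 1)
    (S : Finset V) (hS0 : ∀ v ∈ S, f v ≠ 0)
    (hdiam : ∀ u ∈ S, ∀ v ∈ S, ‖‖f u‖⁻¹ • f u - ‖f v‖⁻¹ • f v‖ ≤ Δ) :
    ∑ v ∈ S, π v * ‖f v‖ ^ 2 ≤ 1 / (1 - Δ ^ 2) := by
  have hΔsq : Δ ^ 2 < 1 := by nlinarith
  have hpos : 0 < 1 - Δ ^ 2 := by linarith
  rcases S.eq_empty_or_nonempty with rfl | ⟨w, hw⟩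
  · simp only [Finset.sum_empty]; exact div_nonneg one_pos.le hpos.le
  set c : ℝ := 1 - Δ ^ 2 / 2 with hc
  have hcpos : 0 < c := by simp only [hc]; nlinarith
  set x : EuclideanSpace ℝ (Fin h) := ‖f w‖⁻¹ • f w with hx
  have hxnorm : ‖x‖ = 1 := by
    rw [hx, norm_smul, norm_inv, norm_norm,
      inv_mul_cancel₀ (norm_ne_zero_iff.mpr (hS0 w hw))]
  -- inner product lower bound
  have key : ∀ v ∈ S, c * ‖f v‖ ≤ ⟪f v, x⟫_ℝ := by
    intro v hv
    have hfv : ‖f v‖ ≠ 0 := norm_ne_zero_iff.mpr (hS0 v hv)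
    have hu : ‖‖f v‖⁻¹ • f v‖ = 1 := by
      rw [norm_smul, norm_inv, norm_norm, inv_mul_cancel₀ hfv]
    have hinner : ⟪‖f v‖⁻¹ • f v, x⟫_ℝ = 1 - ‖‖f v‖⁻¹ • f v - x‖ ^ 2 / 2 := by
      have := norm_sub_sq_real (‖f v‖⁻¹ • f v) x
      rw [hu, hxnorm] at this
      linarith
    have hd := hdiam v hv w hw
    have : c ≤ ⟪‖f v‖⁻¹ • f v, x⟫_ℝ := by
      rw [hinner, hc]
      have h1 : ‖‖f v‖⁻¹ • f v - x‖ ^ 2 ≤ Δ ^ 2 := by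
        apply sq_le_sq' _ hd
        linarith [norm_nonneg (‖f v‖⁻¹ • f v - x)]
      linarith
    calc c * ‖f v‖ ≤ ⟪‖f v‖⁻¹ • f v, x⟫_ℝ * ‖f v‖ := by
          apply mul_le_mul_of_nonneg_right this (norm_nonneg _)
      _ = ⟪f v, x⟫_ℝ := by
          rw [real_inner_smul_left]
          field_simp
  -- quadratic form bound
  have hinner_eq : ∀ (y z : EuclideanSpace ℝ (Fin h)), ⟪y, z⟫_ℝ = ∑ a, y a * z a := by
    intro y z
    simp [PiLp.inner_apply, RCLike.inner_apply, mul_comm]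
  have hquad : ∑ v, π v * ⟪f v, x⟫_ℝ ^ 2 ≤ 1 := by
    have h2 := hiso.dotProduct_mulVec_nonneg (x : Fin h → ℝ)
    rw [Matrix.sub_mulVec, Matrix.one_mulVec, star_trivial,
      dotProduct_sub] at h2
    have hxx : dotProduct (x : Fin h → ℝ) (x : Fin h → ℝ) = 1 := by
      have h3 : ⟪x, x⟫_ℝ = 1 := by
        rw [real_inner_self_eq_norm_sq, hxnorm]; norm_num
      rw [hinner_eq] at h3
      exact h3
    have step1 : (Matrix.of (fun a b => ∑ v, π v * f v a * f v b)).mulVec (x : Fin h → ℝ)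
        = fun a => ∑ v, π v * ⟪f v, x⟫_ℝ * f v a := by
      funext a
      simp only [Matrix.mulVec, dotProduct, Matrix.of_apply]
      simp_rw [Finset.sum_mul]
      rw [Finset.sum_comm]
      refine Finset.sum_congr rfl fun v _ => ?_
      rw [hinner_eq]
      rw [show (∑ b, π v * f v a * f v b * x b) = ∑ b, (π v * f v a) * (f v b * x b) from
        Finset.sum_congr rfl fun b _ => by ring, ← Finset.mul_sum]
      ring
    have hMx : dotProduct (x : Fin h → ℝ)
        ((Matrix.of (fun a b => ∑ v, π v * f v a * f v b)).mulVec (x : Fin h → ℝ))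
        = ∑ v, π v * ⟪f v, x⟫_ℝ ^ 2 := by
      rw [step1]
      simp only [dotProduct]
      simp_rw [Finset.mul_sum]
      rw [Finset.sum_comm]
      refine Finset.sum_congr rfl fun v _ => ?_
      rw [show (∑ a, x a * (π v * ⟪f v, x⟫_ℝ * f v a))
          = ∑ a, (π v * ⟪f v, x⟫_ℝ) * (f v a * x a) from
        Finset.sum_congr rfl fun a _ => by ring, ← Finset.mul_sum, ← hinner_eq]
      ring
    rw [hMx, hxx] at h2
    linarith
  -- combine
  have hmain : c ^ 2 * ∑ v ∈ S, π v * ‖f v‖ ^ 2 ≤ 1 := by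
    calc c ^ 2 * ∑ v ∈ S, π v * ‖f v‖ ^ 2
        = ∑ v ∈ S, π v * (c * ‖f v‖) ^ 2 := by
          rw [Finset.mul_sum]; apply Finset.sum_congr rfl; intro v _; ring
      _ ≤ ∑ v ∈ S, π v * ⟪f v, x⟫_ℝ ^ 2 := by
          apply Finset.sum_le_sum
          intro v hv
          apply mul_le_mul_of_nonneg_left _ (hπ v)
          apply sq_le_sq' _ (key v hv)
          have := key v hv
          have h0 : 0 ≤ c * ‖f v‖ := mul_nonneg hcpos.le (norm_nonneg _)
          linarith
      _ ≤ ∑ v, π v * ⟪f v, x⟫_ℝ ^ 2 := by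
          apply Finset.sum_le_sum_of_subset_of_nonneg (Finset.subset_univ S)
          intro v _ _; exact mul_nonneg (hπ v) (sq_nonneg _)
      _ ≤ 1 := hquad
  have hcsq : 1 - Δ ^ 2 ≤ c ^ 2 := by rw [hc]; nlinarith
  have hm0 : 0 ≤ ∑ v ∈ S, π v * ‖f v‖ ^ 2 :=
    Finset.sum_nonneg fun v _ => mul_nonneg (hπ v) (sq_nonneg _)
  rw [le_div_iff₀ hpos]
  nlinarith
end

section
/- Let G = (V,E) be a graph embedded in the unit sphere of ℝ^k via vertices x_i ∈ S^{k−1}, i ∈ [n], such that ‖x_i − x_j‖ ≤ δ for every edge (i,j) ∈ E, and such that at least n/3 of the points x_j are at Euclidean distance ≥ c from any fixed x_i, for a constant c > 0. Then for every doubly stochastic symmetric reweighting P supported on E (P(i,j) ≥ 0, P(i,j) = 0 for (i,j) ∉ E, Σ_j P(i,j) = 1, P symmetric), the second smallest eigenvalue of I − P is at most 6δ²/c². In particular λ₂*(G) ≤ 6δ²/c². -/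
/-!
Centre the points at their centroid `z`. Each coordinate of `i ↦ x i - z` is a test vector
orthogonal to the constant vector, which lies in the kernel of `I - P`, so the Rayleigh
principle bounds `λ₂ · ∑ ‖x i - z‖²` by the sum over coordinates of the quadratic forms,
i.e. by `½ ∑ P i j ‖x i - x j‖² ≤ n δ² / 2`. On the other hand
`∑ ‖x i - z‖² = (1 / 2n) ∑ ‖x i - x j‖² ≥ n c² / 6` by the spread hypothesis.
-/

open Finset Matrix WithLp
open scoped RealInnerProductSpace

lemma Matrix.IsSymm.dotProduct_mulVec_eq_zero_of_mulVec_eq_zero {ι : Type*} [Fintype ι]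
    {A : Matrix ι ι ℝ} (hA : A.IsSymm) {a : ι → ℝ} (ha : A *ᵥ a = 0) (v : ι → ℝ) :
    a ⬝ᵥ (A *ᵥ v) = 0 := by
  rw [← hA.eq, dotProduct_transpose_mulVec, ha, dotProduct_zero]

namespace Matrix.IsHermitian

section

variable {ι : Type*} [Fintype ι] [DecidableEq ι] {A : Matrix ι ι ℝ} (hA : A.IsHermitian)

lemma inner_eigenvectorBasis_mulVec (v : ι → ℝ) (i : ι) :
    ⟪hA.eigenvectorBasis i, toLp 2 (A *ᵥ v)⟫ =
      hA.eigenvalues i * ⟪hA.eigenvectorBasis i, toLp 2 v⟫ := by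
  simp only [EuclideanSpace.inner_eq_star_dotProduct, star_trivial]
  rw [dotProduct_comm, dotProduct_mulVec, ← mulVec_transpose,
    (isHermitian_iff_isSymm.mp hA).eq, hA.mulVec_eigenvectorBasis, smul_dotProduct,
    dotProduct_comm, smul_eq_mul]

lemma dotProduct_self_eq_sum_sq_inner (v : ι → ℝ) :
    v ⬝ᵥ v = ∑ i, ⟪hA.eigenvectorBasis i, toLp 2 v⟫ ^ 2 := by
  rw [hA.eigenvectorBasis.sum_sq_inner_right, ← real_inner_self_eq_norm_sq]
  rfl

lemma dotProduct_mulVec_self_eq_sum (v : ι → ℝ) :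
    v ⬝ᵥ (A *ᵥ v) = ∑ i, hA.eigenvalues i * ⟪hA.eigenvectorBasis i, toLp 2 v⟫ ^ 2 := by
  have h : v ⬝ᵥ (A *ᵥ v) = ⟪toLp 2 v, toLp 2 (A *ᵥ v)⟫ := by
    simp [EuclideanSpace.inner_toLp_toLp, dotProduct_comm]
  rw [h, ← hA.eigenvectorBasis.sum_inner_mul_inner]
  refine sum_congr rfl fun i _ => ?_
  rw [hA.inner_eigenvectorBasis_mulVec, real_inner_comm]
  ring

end

variable {n : ℕ} {A : Matrix (Fin n) (Fin n) ℝ}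

lemma second_eigenvalue_mul_dotProduct_self_le (hA : A.IsHermitian) (hn : 1 < n)
    {ev : Fin n → ℝ} (hmono : Monotone ev) {σ : Equiv.Perm (Fin n)}
    (hev : ev = hA.eigenvalues ∘ σ) (v : Fin n → ℝ)
    (hv : ⟪hA.eigenvectorBasis (σ ⟨0, by omega⟩), toLp 2 v⟫ = 0) :
    ev ⟨1, hn⟩ * (v ⬝ᵥ v) ≤ v ⬝ᵥ (A *ᵥ v) := by
  set c : Fin n → ℝ := fun i => ⟪hA.eigenvectorBasis (σ i), toLp 2 v⟫ with hc
  have hsq : v ⬝ᵥ v = ∑ i, c i ^ 2 := by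
    rw [hA.dotProduct_self_eq_sum_sq_inner]
    exact (Equiv.sum_comp σ fun j => ⟪hA.eigenvectorBasis j, toLp 2 v⟫ ^ 2).symm
  have hquad : v ⬝ᵥ (A *ᵥ v) = ∑ i, ev i * c i ^ 2 := by
    rw [hA.dotProduct_mulVec_self_eq_sum, hev]
    exact (Equiv.sum_comp σ fun j =>
      hA.eigenvalues j * ⟪hA.eigenvectorBasis j, toLp 2 v⟫ ^ 2).symm
  rw [hsq, hquad, mul_sum]
  refine sum_le_sum fun i _ => ?_
  rcases eq_or_ne i ⟨0, by omega⟩ with rfl | hi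
  · simp [hc, hv]
  · have h1i : (⟨1, hn⟩ : Fin n) ≤ i := Nat.one_le_iff_ne_zero.mpr fun h => hi (Fin.ext h)
    exact mul_le_mul_of_nonneg_right (hmono h1i) (sq_nonneg _)

lemma second_eigenvalue_mul_dotProduct_self_le_of_mulVec_eq_zero (hA : A.IsHermitian)
    (hn : 1 < n) {ev : Fin n → ℝ} (hmono : Monotone ev) {σ : Equiv.Perm (Fin n)}
    (hev : ev = hA.eigenvalues ∘ σ) (hpos : 0 < ev ⟨1, hn⟩) {a : Fin n → ℝ}
    (ha : A *ᵥ a = 0) (ha0 : a ≠ 0) (v : Fin n → ℝ) (hv : a ⬝ᵥ v = 0) :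
    ev ⟨1, hn⟩ * (v ⬝ᵥ v) ≤ v ⬝ᵥ (A *ᵥ v) := by
  -- Shifting `v` along `a` removes its component on the bottom eigenvector `u` without changing
  -- the quadratic form, and can only increase `v ⬝ᵥ v` because `a ⬝ᵥ v = 0`.
  set u := hA.eigenvectorBasis (σ ⟨0, by omega⟩)
  have hua : ⟪u, toLp 2 a⟫ ≠ 0 := by
    intro h
    have := hA.second_eigenvalue_mul_dotProduct_self_le hn hmono hev a h
    rw [ha, dotProduct_zero] at this
    have : 0 < a ⬝ᵥ a := by simpa using dotProduct_star_self_pos_iff.mpr ha0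
    nlinarith
  set s := ⟪u, toLp 2 v⟫ / ⟪u, toLp 2 a⟫
  have hw : ⟪u, toLp 2 (v - s • a)⟫ = 0 := by
    rw [toLp_sub, toLp_smul, inner_sub_right, real_inner_smul_right, div_mul_cancel₀ _ hua,
      sub_self]
  have hAw : (v - s • a) ⬝ᵥ (A *ᵥ (v - s • a)) = v ⬝ᵥ (A *ᵥ v) := by
    rw [mulVec_sub, mulVec_smul, ha, smul_zero, sub_zero, sub_dotProduct, smul_dotProduct,
      (isHermitian_iff_isSymm.mp hA).dotProduct_mulVec_eq_zero_of_mulVec_eq_zero ha, smul_zero,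
      sub_zero]
  have hww : v ⬝ᵥ v ≤ (v - s • a) ⬝ᵥ (v - s • a) := by
    simp only [sub_dotProduct, dotProduct_sub, smul_dotProduct, dotProduct_smul, hv,
      dotProduct_comm v a, smul_eq_mul]
    have : 0 ≤ a ⬝ᵥ a := by simpa using dotProduct_star_self_nonneg a
    nlinarith [mul_nonneg (sq_nonneg s) this]
  calc ev ⟨1, hn⟩ * (v ⬝ᵥ v) ≤ ev ⟨1, hn⟩ * ((v - s • a) ⬝ᵥ (v - s • a)) :=
        mul_le_mul_of_nonneg_left hww hpos.le
    _ ≤ (v - s • a) ⬝ᵥ (A *ᵥ (v - s • a)) :=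
        hA.second_eigenvalue_mul_dotProduct_self_le hn hmono hev _ hw
    _ = v ⬝ᵥ (A *ᵥ v) := hAw

end Matrix.IsHermitian

namespace Matrix

variable {ι : Type*} [Fintype ι] [DecidableEq ι] {P : Matrix ι ι ℝ}

lemma one_sub_mulVec_const_one (hrow : ∀ i, ∑ j, P i j = 1) :
    (1 - P) *ᵥ (fun _ => 1) = 0 := by
  rw [sub_mulVec, one_mulVec]
  ext i
  simp [mulVec, dotProduct, hrow]

lemma dotProduct_one_sub_mulVec_self (hrow : ∀ i, ∑ j, P i j = 1)
    (hsymm : ∀ i j, P i j = P j i) (v : ι → ℝ) :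
    v ⬝ᵥ ((1 - P) *ᵥ v) = (∑ i, ∑ j, P i j * (v i - v j) ^ 2) / 2 := by
  have hrow_sq : ∑ i, ∑ j, P i j * v i ^ 2 = ∑ i, v i ^ 2 := by
    simp_rw [← sum_mul, hrow, one_mul]
  have hcol_sq : ∑ i, ∑ j, P i j * v j ^ 2 = ∑ i, v i ^ 2 := by
    rw [sum_comm]; simp_rw [hsymm _ _, ← sum_mul, hrow, one_mul]
  have expand : ∑ i, ∑ j, P i j * (v i - v j) ^ 2 = ∑ i, ∑ j, P i j * v i ^ 2
      + ∑ i, ∑ j, P i j * v j ^ 2 - 2 * ∑ i, v i * ∑ j, P i j * v j := by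
    simp only [mul_sum, ← sum_add_distrib, ← sum_sub_distrib]
    exact sum_congr rfl fun i _ => sum_congr rfl fun j _ => by ring
  rw [expand, hrow_sq, hcol_sq, sub_mulVec, one_mulVec, dotProduct_sub]
  simp only [dotProduct, mulVec, sq]
  ring

end Matrix

section Centroid

variable {ι E : Type*} [Fintype ι] [NormedAddCommGroup E] [InnerProductSpace ℝ E]

lemma sum_sub_centroid_eq_zero (x : ι → E) :
    ∑ i, (x i - (Fintype.card ι : ℝ)⁻¹ • ∑ j, x j) = 0 := by
  rcases isEmpty_or_nonempty ι with _ | _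
  · simp
  · rw [sum_sub_distrib, sum_const, card_univ, ← Nat.cast_smul_eq_nsmul ℝ, smul_smul,
      mul_inv_cancel₀ (by simp), one_smul, sub_self]

lemma sum_sum_norm_sub_sq_eq_of_sum_eq_zero {v : ι → E} (hv : ∑ i, v i = 0) :
    ∑ i, ∑ j, ‖v i - v j‖ ^ 2 = 2 * Fintype.card ι * ∑ i, ‖v i‖ ^ 2 := by
  have hcross : ∑ i, ∑ j, ⟪v i, v j⟫ = 0 := by
    simp_rw [← inner_sum, ← sum_inner, hv, inner_zero_left]
  simp_rw [norm_sub_sq_real, sum_add_distrib, sum_sub_distrib, ← mul_sum, hcross]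
  simp only [sum_const, card_univ, nsmul_eq_mul, ← mul_sum]
  ring

lemma sum_sum_norm_sub_sq_eq (x : ι → E) :
    ∑ i, ∑ j, ‖x i - x j‖ ^ 2 =
      2 * Fintype.card ι * ∑ i, ‖x i - (Fintype.card ι : ℝ)⁻¹ • ∑ j, x j‖ ^ 2 := by
  simp_rw [← sum_sum_norm_sub_sq_eq_of_sum_eq_zero (sum_sub_centroid_eq_zero x),
    sub_sub_sub_cancel_right]

end Centroid

lemma second_eigenvalue_mul_sum_norm_sub_centroid_sq_le {n : ℕ} {κ : Type*} [Fintype κ]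
    {P : Matrix (Fin n) (Fin n) ℝ} (hrow : ∀ i, ∑ j, P i j = 1)
    (hsymm : ∀ i j, P i j = P j i)
    (hL : (1 - P).IsHermitian) (hn : 1 < n) {ev : Fin n → ℝ} (hmono : Monotone ev)
    {σ : Equiv.Perm (Fin n)} (hev : ev = hL.eigenvalues ∘ σ) (hpos : 0 < ev ⟨1, hn⟩)
    (x : Fin n → EuclideanSpace ℝ κ) :
    ev ⟨1, hn⟩ * ∑ i, ‖x i - (n : ℝ)⁻¹ • ∑ j, x j‖ ^ 2 ≤
      (∑ i, ∑ j, P i j * ‖x i - x j‖ ^ 2) / 2 := by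
  set v : Fin n → EuclideanSpace ℝ κ := fun i => x i - (n : ℝ)⁻¹ • ∑ j, x j
  have hv : ∑ i, v i = 0 := by
    simpa only [Fintype.card_fin] using sum_sub_centroid_eq_zero x
  have hcoord : ∀ t, ev ⟨1, hn⟩ * ((fun i => v i t) ⬝ᵥ (fun i => v i t)) ≤
      (∑ i, ∑ j, P i j * (v i t - v j t) ^ 2) / 2 := by
    intro t
    rw [← dotProduct_one_sub_mulVec_self hrow hsymm]
    refine hL.second_eigenvalue_mul_dotProduct_self_le_of_mulVec_eq_zero hn hmono hev hpos
      (one_sub_mulVec_const_one hrow) ?_ _ ?_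
    · exact fun h => by simpa using congrFun h ⟨0, by omega⟩
    · simpa [dotProduct] using congrArg (fun w => w t) hv
  have hnorm : ∑ i, ‖v i‖ ^ 2 = ∑ t, (fun i => v i t) ⬝ᵥ (fun i => v i t) := by
    simp_rw [EuclideanSpace.real_norm_sq_eq, dotProduct, ← sq]
    exact sum_comm
  have hdiff : ∑ i, ∑ j, P i j * ‖x i - x j‖ ^ 2 =
      ∑ t, ∑ i, ∑ j, P i j * (v i t - v j t) ^ 2 := by
    symm
    rw [sum_comm]
    refine sum_congr rfl fun i _ => ?_
    rw [sum_comm]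
    refine sum_congr rfl fun j _ => ?_
    rw [EuclideanSpace.real_norm_sq_eq, mul_sum]
    simp [v]
  rw [hnorm, hdiff, mul_sum, sum_div]
  exact sum_le_sum fun t _ => hcoord t

section Spread

variable {ι E : Type*} [Fintype ι] [SeminormedAddCommGroup E]

lemma sum_sum_mul_norm_sub_sq_le {P : ι → ι → ℝ} (hP0 : ∀ i j, 0 ≤ P i j)
    (hrow : ∀ i, ∑ j, P i j = 1) {x : ι → E} {δ : ℝ}
    (hedge : ∀ i j, P i j ≠ 0 → ‖x i - x j‖ ≤ δ) :
    ∑ i, ∑ j, P i j * ‖x i - x j‖ ^ 2 ≤ Fintype.card ι * δ ^ 2 := by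
  have hterm : ∀ i j, P i j * ‖x i - x j‖ ^ 2 ≤ P i j * δ ^ 2 := by
    intro i j
    rcases eq_or_ne (P i j) 0 with h | h
    · simp [h]
    · exact mul_le_mul_of_nonneg_left
        (pow_le_pow_left₀ (norm_nonneg _) (hedge i j h) 2) (hP0 i j)
  calc ∑ i, ∑ j, P i j * ‖x i - x j‖ ^ 2 ≤ ∑ i, ∑ j, P i j * δ ^ 2 :=
        sum_le_sum fun i _ => sum_le_sum fun j _ => hterm i j
    _ = Fintype.card ι * δ ^ 2 := by simp [← sum_mul, hrow]

lemma card_mul_le_sum_sum_norm_sub_sq {x : ι → E} {c m : ℝ} (hc : 0 ≤ c)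
    (hspread : ∀ i, m ≤ ((univ.filter fun j => c ≤ ‖x i - x j‖).card : ℝ)) :
    Fintype.card ι * (m * c ^ 2) ≤ ∑ i, ∑ j, ‖x i - x j‖ ^ 2 := by
  have hrow : ∀ i, m * c ^ 2 ≤ ∑ j, ‖x i - x j‖ ^ 2 := by
    intro i
    calc m * c ^ 2 ≤ (univ.filter fun j => c ≤ ‖x i - x j‖).card * c ^ 2 :=
          mul_le_mul_of_nonneg_right (hspread i) (sq_nonneg c)
      _ ≤ ∑ j ∈ univ.filter fun j => c ≤ ‖x i - x j‖, ‖x i - x j‖ ^ 2 := by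
          rw [← nsmul_eq_mul]
          exact card_nsmul_le_sum _ _ _ fun j hj =>
            pow_le_pow_left₀ hc (mem_filter.mp hj).2 2
      _ ≤ ∑ j, ‖x i - x j‖ ^ 2 :=
          sum_le_sum_of_subset_of_nonneg (filter_subset _ _) fun j _ _ => sq_nonneg _
  simpa using sum_le_sum fun i (_ : i ∈ univ) => hrow i

end Spread

theorem stmt_19_general {n k : ℕ} (hn : 1 < n)
    (E : Fin n → Fin n → Prop)
    (x : Fin n → EuclideanSpace ℝ (Fin k))
    (δ c : ℝ) (hc : 0 < c)
    (hedge : ∀ i j, E i j → ‖x i - x j‖ ≤ δ)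
    (hspread : ∀ i, (n : ℝ) / 3 ≤
      ((Finset.univ.filter fun j => c ≤ ‖x i - x j‖).card : ℝ))
    (P : Fin n → Fin n → ℝ)
    (hP0 : ∀ i j, 0 ≤ P i j) (hPsupp : ∀ i j, ¬ E i j → P i j = 0)
    (hProw : ∀ i, ∑ j, P i j = 1) (hPsym : ∀ i j, P i j = P j i)
    (hL : ((1 : Matrix (Fin n) (Fin n) ℝ) - Matrix.of (fun i j => P i j)).IsHermitian)
    (ev : Fin n → ℝ) (hmono : Monotone ev)
    (hev : ∃ σ : Equiv.Perm (Fin n), ev = hL.eigenvalues ∘ σ) :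
    ev ⟨1, hn⟩ ≤ 6 * δ ^ 2 / c ^ 2 := by
  obtain ⟨σ, hev⟩ := hev
  rcases le_or_gt (ev ⟨1, hn⟩) 0 with hnonpos | hpos
  · exact hnonpos.trans (by positivity)
  have hrayleigh :=
    second_eigenvalue_mul_sum_norm_sub_centroid_sq_le hProw hPsym hL hn hmono hev hpos x
  have hnum := sum_sum_mul_norm_sub_sq_le hP0 hProw (x := x) fun i j hP =>
    hedge i j (not_not.mp (mt (hPsupp i j) hP))
  have hden := card_mul_le_sum_sum_norm_sub_sq hc.le hspread
  rw [sum_sum_norm_sub_sq_eq] at hden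
  simp only [Fintype.card_fin] at hnum hden
  have hn0 : (0 : ℝ) < n := by positivity
  set D := ∑ i, ‖x i - (n : ℝ)⁻¹ • ∑ j, x j‖ ^ 2
  have hD : c ^ 2 / 6 * n ≤ D :=
    le_of_mul_le_mul_left (by linarith) (by positivity : (0 : ℝ) < 2 * n)
  have hquot : ev ⟨1, hn⟩ * (c ^ 2 / 6 * n) ≤ n * δ ^ 2 / 2 :=
    (mul_le_mul_of_nonneg_left hD hpos.le).trans (hrayleigh.trans (by linarith))
  rw [le_div_iff₀ (by positivity)]
  nlinarith [mul_nonneg hn0.le (sq_nonneg δ)]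

/-- Spherical proximity graphs have small reweighted spectral gap: if the vertices of
`G` are embedded as unit vectors `x_i ∈ S^{k−1}` with `‖x_i − x_j‖ ≤ δ` on every edge,
and for every `i` at least `n/3` of the points are at distance ≥ `c > 0` from `x_i`,
then for every doubly stochastic symmetric reweighting `P` supported on `E`, the second
smallest eigenvalue of `I − P` is at most `6δ²/c²`. -/
theorem stmt_19 {n k : ℕ} (hn : 1 < n)
    (E : Fin n → Fin n → Prop) (hsymm : Symmetric E)
    (x : Fin n → EuclideanSpace ℝ (Fin k)) (hunit : ∀ i, ‖x i‖ = 1)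
    (δ c : ℝ) (hδ : 0 ≤ δ) (hc : 0 < c)
    (hedge : ∀ i j, E i j → ‖x i - x j‖ ≤ δ)
    (hspread : ∀ i, (n : ℝ) / 3 ≤
      ((Finset.univ.filter fun j => c ≤ ‖x i - x j‖).card : ℝ))
    (P : Fin n → Fin n → ℝ)
    (hP0 : ∀ i j, 0 ≤ P i j) (hPsupp : ∀ i j, ¬ E i j → P i j = 0)
    (hProw : ∀ i, ∑ j, P i j = 1) (hPsym : ∀ i j, P i j = P j i)
    (hL : ((1 : Matrix (Fin n) (Fin n) ℝ) - Matrix.of (fun i j => P i j)).IsHermitian)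
    (ev : Fin n → ℝ) (hmono : Monotone ev)
    (hev : ∃ σ : Equiv.Perm (Fin n), ev = hL.eigenvalues ∘ σ) :
    ev ⟨1, hn⟩ ≤ 6 * δ ^ 2 / c ^ 2 :=
  stmt_19_general hn E x δ c hc hedge hspread P hP0 hPsupp hProw hPsym hL ev hmono hev
end
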